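/- arXiv:2106.03174 — 7 statements merged into one kernel-verified Lean document; each statement's English description precedes it below -/
import Mathlib

section
/- Let G = (V,E) be a locally finite, connected graph and Γ a subgroup of the automorphism group of G acting transitively on V. Fix a vertex x and for q > 0 let t_q = #{y : y ~ x and Δ(x,y) = q}. Then for every q > 0: t_{q^{-1}} = q·t_q; in particular, t_q > 0 if and only if t_{q^{-1}} > 0, so the set of values of Δ on pairs of neighbors is closed under taking inverses. -/
open SimpleGraph

attribute [local instance] Classical.propDecidable

/-- The modular function `Δ(x,y) = |Γ_y x| / |Γ_x y|` of a group `Γ` acting on `V`. -/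
noncomputable def modular {V : Type*} (Γ : Type*) [Group Γ] [MulAction Γ V] (x y : V) : ℝ :=
  ((MulAction.orbit (MulAction.stabilizer Γ y) x).ncard : ℝ) /
    ((MulAction.orbit (MulAction.stabilizer Γ x) y).ncard : ℝ)

/-!
Double counting. For a neighbour `y` of `x`, the points `z` for which `(x, z)` is a
`Γ`-translate of the reversed edge `(y, x)` form a `Γ_x`-orbit `F(y)` with `|Γ_y x|` elements,
all neighbours of `x` with `Δ(x, z) = Δ(x, y)⁻¹`; moreover `z ∈ F(y) ↔ y ∈ F(z)`. Give the pair
`(y, z)` with `z ∈ F(y)` the weight `|Γ_x z|⁻¹`. Each `y` with `Δ(x, y) = q` then carries total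
weight `1`, and each `z` with `Δ(x, z) = q⁻¹` receives `|Γ_z x| / |Γ_x z| = q⁻¹`, so
`t_q = q⁻¹ t_{q⁻¹}`.
-/

open MulAction Pointwise Finset

section Modular

variable {V Γ : Type*} [Group Γ] [MulAction Γ V]

lemma mem_orbit_stabilizer_iff {u v w : V} :
    w ∈ orbit (stabilizer Γ u) v ↔ ∃ h : Γ, h • u = u ∧ h • v = w :=
  ⟨fun ⟨⟨h, hh⟩, hw⟩ => ⟨h, hh, hw⟩, fun ⟨h, hh, hw⟩ => ⟨⟨h, hh⟩, hw⟩⟩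

lemma orbit_stabilizer_smul (g : Γ) (u v : V) :
    orbit (stabilizer Γ (g • u)) (g • v) = g • orbit (stabilizer Γ u) v := by
  ext w
  simp only [Set.mem_smul_set_iff_inv_smul_mem, mem_orbit_stabilizer_iff]
  constructor
  · rintro ⟨h, hu, rfl⟩
    exact ⟨g⁻¹ * h * g, by simp [mul_smul, hu], by simp [mul_smul]⟩
  · rintro ⟨h, hu, hv⟩
    refine ⟨g * h * g⁻¹, by simp [mul_smul, hu], ?_⟩
    simp [mul_smul, hv]

lemma ncard_orbit_stabilizer_smul (g : Γ) (u v : V) :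
    (orbit (stabilizer Γ (g • u)) (g • v)).ncard = (orbit (stabilizer Γ u) v).ncard := by
  rw [orbit_stabilizer_smul, Set.ncard_smul_set]

lemma modular_smul (g : Γ) (u v : V) : modular Γ (g • u) (g • v) = modular Γ u v := by
  simp only [modular, ncard_orbit_stabilizer_smul]

lemma modular_swap (u v : V) : modular Γ v u = (modular Γ u v)⁻¹ :=
  (inv_div _ _).symm

lemma ncard_orbit_stabilizer_ne_zero {u v : V} (h : modular Γ u v ≠ 0) :
    (orbit (stabilizer Γ v) u).ncard ≠ 0 := by
  rintro h0
  simp [modular, h0] at h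

end Modular

section FlipFiber

variable {V : Type*} (Γ : Type*) [Group Γ] [MulAction Γ V]

def flipFiber (x y : V) : Set V := {z | ∃ γ : Γ, γ • y = x ∧ γ • x = z}

variable {Γ}

lemma mem_flipFiber_comm {x y z : V} : z ∈ flipFiber Γ x y ↔ y ∈ flipFiber Γ x z := by
  constructor <;>
  · rintro ⟨γ, hy, hx⟩
    exact ⟨γ⁻¹, by rw [← hx, inv_smul_smul], by rw [← hy, inv_smul_smul]⟩

lemma flipFiber_eq_orbit {x y z : V} (hz : z ∈ flipFiber Γ x y) :
    flipFiber Γ x y = orbit (stabilizer Γ x) z := by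
  obtain ⟨γ, hy, rfl⟩ := hz
  ext w
  rw [mem_orbit_stabilizer_iff]
  constructor
  · rintro ⟨δ, hδy, rfl⟩
    exact ⟨δ * γ⁻¹, by rw [mul_smul, ← hy, inv_smul_smul, hδy, hy],
      by rw [mul_smul, inv_smul_smul]⟩
  · rintro ⟨h, hx, rfl⟩
    exact ⟨h * γ, by rw [mul_smul, hy, hx], mul_smul _ _ _⟩

lemma ncard_orbit_stabilizer_of_mem_flipFiber {x y z : V} (hz : z ∈ flipFiber Γ x y) :
    (orbit (stabilizer Γ x) z).ncard = (orbit (stabilizer Γ y) x).ncard := by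
  obtain ⟨γ, hy, rfl⟩ := hz
  have h := ncard_orbit_stabilizer_smul γ y x
  rwa [hy] at h

lemma ncard_flipFiber {x y z : V} (hz : z ∈ flipFiber Γ x y) :
    (flipFiber Γ x y).ncard = (orbit (stabilizer Γ y) x).ncard := by
  rw [flipFiber_eq_orbit hz, ncard_orbit_stabilizer_of_mem_flipFiber hz]

lemma modular_of_mem_flipFiber {x y z : V} (hz : z ∈ flipFiber Γ x y) :
    modular Γ x z = (modular Γ x y)⁻¹ := by
  obtain ⟨γ, hy, rfl⟩ := hz
  have h := modular_smul γ y x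
  rw [hy] at h
  rw [h, modular_swap]

lemma flipFiber_subset_neighborSet (G : SimpleGraph V)
    (hauto : ∀ (γ : Γ) (u v : V), G.Adj (γ • u) (γ • v) ↔ G.Adj u v) {x y : V}
    (hxy : G.Adj x y) : flipFiber Γ x y ⊆ G.neighborSet x := by
  rintro _ ⟨γ, hy, rfl⟩
  have h := (hauto γ y x).2 hxy.symm
  rwa [hy] at h

end FlipFiber

section DoubleCounting

variable {V : Type*} {G : SimpleGraph V} [G.LocallyFinite] {Γ : Type*} [Group Γ]
  [MulAction Γ V] {x : V}

variable (G Γ x) in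
noncomputable abbrev modularNeighbors (q : ℝ) : Finset V :=
  (G.neighborFinset x).filter (fun y => modular Γ x y = q)

lemma flipFiber_subset_modularNeighbors
    (hauto : ∀ (γ : Γ) (u v : V), G.Adj (γ • u) (γ • v) ↔ G.Adj u v) {y : V}
    (hxy : G.Adj x y) : flipFiber Γ x y ⊆ modularNeighbors G Γ x (modular Γ x y)⁻¹ := by
  intro z hz
  simp only [coe_filter, mem_neighborFinset, Set.mem_ofPred_eq]
  exact ⟨flipFiber_subset_neighborSet G hauto hxy hz, modular_of_mem_flipFiber hz⟩

lemma card_filter_mem_flipFiber {s : Finset V} {y z : V} (hs : flipFiber Γ x y ⊆ s)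
    (hz : z ∈ flipFiber Γ x y) :
    (s.filter (· ∈ flipFiber Γ x y)).card = (orbit (stabilizer Γ y) x).ncard := by
  rw [← ncard_flipFiber hz, ← Set.ncard_coe_finset, coe_filter]
  congr 1
  exact Set.sep_mem_eq.trans (Set.inter_eq_right.2 hs)

lemma sum_flipFiber_weight_eq_one
    (hauto : ∀ (γ : Γ) (u v : V), G.Adj (γ • u) (γ • v) ↔ G.Adj u v)
    (htrans : ∀ y : V, ∃ γ : Γ, γ • y = x) {q : ℝ} (hq : q ≠ 0) {y : V}
    (hy : y ∈ modularNeighbors G Γ x q) :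
    ∑ z ∈ modularNeighbors G Γ x q⁻¹,
      (if z ∈ flipFiber Γ x y then ((orbit (stabilizer Γ x) z).ncard : ℝ)⁻¹ else 0) = 1 := by
  rw [mem_filter, mem_neighborFinset] at hy
  obtain ⟨hxy, rfl⟩ := hy
  obtain ⟨g, hg⟩ := htrans y
  have hgx : g • x ∈ flipFiber Γ x y := ⟨g, hg, rfl⟩
  have hne : ((orbit (stabilizer Γ y) x).ncard : ℝ) ≠ 0 :=
    Nat.cast_ne_zero.2 (ncard_orbit_stabilizer_ne_zero hq)
  rw [← sum_filter, sum_congr rfl fun z hz =>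
      by rw [ncard_orbit_stabilizer_of_mem_flipFiber (mem_filter.1 hz).2],
    sum_const, card_filter_mem_flipFiber (flipFiber_subset_modularNeighbors hauto hxy) hgx,
    nsmul_eq_mul, mul_inv_cancel₀ hne]

lemma sum_flipFiber_weight_eq_modular
    (hauto : ∀ (γ : Γ) (u v : V), G.Adj (γ • u) (γ • v) ↔ G.Adj u v)
    (htrans : ∀ y : V, ∃ γ : Γ, γ • y = x) {q : ℝ} {z : V}
    (hz : z ∈ modularNeighbors G Γ x q⁻¹) :
    ∑ y ∈ modularNeighbors G Γ x q,
      (if z ∈ flipFiber Γ x y then ((orbit (stabilizer Γ x) z).ncard : ℝ)⁻¹ else 0) = q⁻¹ := by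
  rw [mem_filter, mem_neighborFinset] at hz
  obtain ⟨hxz, hmod⟩ := hz
  obtain ⟨g, hg⟩ := htrans z
  have hsub := flipFiber_subset_modularNeighbors hauto hxz
  rw [hmod, inv_inv] at hsub
  simp_rw [mem_flipFiber_comm (z := z)]
  rw [← sum_filter, sum_const, card_filter_mem_flipFiber hsub ⟨g, hg, rfl⟩, nsmul_eq_mul,
    ← div_eq_mul_inv, ← hmod, modular]

theorem card_modularNeighbors_inv
    (hauto : ∀ (γ : Γ) (u v : V), G.Adj (γ • u) (γ • v) ↔ G.Adj u v)
    (htrans : ∀ y : V, ∃ γ : Γ, γ • y = x) {q : ℝ} (hq : q ≠ 0) :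
    ((modularNeighbors G Γ x q⁻¹).card : ℝ) = q * (modularNeighbors G Γ x q).card := by
  have hcount : ((modularNeighbors G Γ x q).card : ℝ) =
      (modularNeighbors G Γ x q⁻¹).card * q⁻¹ := calc
    _ = ∑ y ∈ modularNeighbors G Γ x q, ∑ z ∈ modularNeighbors G Γ x q⁻¹,
          (if z ∈ flipFiber Γ x y then ((orbit (stabilizer Γ x) z).ncard : ℝ)⁻¹ else 0) := by
      rw [sum_congr rfl fun y hy => sum_flipFiber_weight_eq_one hauto htrans hq hy,
        card_eq_sum_ones, Nat.cast_sum, Nat.cast_one]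
    _ = _ := by
      rw [sum_comm, sum_congr rfl fun z hz => sum_flipFiber_weight_eq_modular hauto htrans hz,
        sum_const, nsmul_eq_mul]
  rw [hcount, mul_comm, inv_mul_cancel_right₀ hq]

end DoubleCounting

theorem stmt6_general {V : Type*} (G : SimpleGraph V) [G.LocallyFinite]
    (Γ : Type*) [Group Γ] [MulAction Γ V]
    (hauto : ∀ (γ : Γ) (u v : V), G.Adj (γ • u) (γ • v) ↔ G.Adj u v)
    (htrans : ∀ x y : V, ∃ γ : Γ, γ • x = y)
    (x : V) (q : ℝ) (hq : 0 < q) :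
    ((((G.neighborFinset x).filter (fun y => modular Γ x y = q⁻¹)).card : ℝ) =
        q * (((G.neighborFinset x).filter (fun y => modular Γ x y = q)).card : ℝ)) ∧
    (0 < ((G.neighborFinset x).filter (fun y => modular Γ x y = q)).card ↔
        0 < ((G.neighborFinset x).filter (fun y => modular Γ x y = q⁻¹)).card) := by
  have hcard := card_modularNeighbors_inv hauto (fun y => htrans y x) hq.ne'
  refine ⟨hcard, ?_⟩
  rw [← Nat.cast_pos (α := ℝ), ← Nat.cast_pos (α := ℝ), hcard, mul_pos_iff_of_pos_left hq]

/-- For a locally finite, connected graph `G` with a group `Γ` acting on it by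
automorphisms, transitively, fix a vertex `x` and for `q > 0` let
`t_q = #{y ~ x : Δ(x,y) = q}`. Then `t_{q⁻¹} = q·t_q`, and in particular
`t_q > 0 ↔ t_{q⁻¹} > 0`. -/
theorem stmt6 {V : Type*} [DecidableEq V] (G : SimpleGraph V) [G.LocallyFinite]
    (hconn : G.Connected)
    (Γ : Type*) [Group Γ] [MulAction Γ V]
    (hauto : ∀ (γ : Γ) (u v : V), G.Adj (γ • u) (γ • v) ↔ G.Adj u v)
    (htrans : ∀ x y : V, ∃ γ : Γ, γ • x = y)
    (x : V) (q : ℝ) (hq : 0 < q) :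
    ((((G.neighborFinset x).filter (fun y => modular Γ x y = q⁻¹)).card : ℝ) =
        q * (((G.neighborFinset x).filter (fun y => modular Γ x y = q)).card : ℝ)) ∧
    (0 < ((G.neighborFinset x).filter (fun y => modular Γ x y = q)).card ↔
        0 < ((G.neighborFinset x).filter (fun y => modular Γ x y = q⁻¹)).card) :=
  stmt6_general G Γ hauto htrans x q hq
end

section
/- Let G = (V,E) be a locally finite, connected, vertex-transitive graph, let o, x be vertices, and let n ≥ 1. Then the number of closed walks of length n based at o that visit x equals the number of closed walks of length n based at x that visit o. Equivalently, if 𝓛_n(v) denotes the set of closed walks of length n based at v and P_{n,v} the uniform distribution on 𝓛_n(v), then P_{n,o}[x ∈ w] = P_{n,x}[o ∈ w]. -/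
/-!
Cutting a walk from `u` to `v` at its first visit to `t` writes the walks through `t` as a
convolution of first-passage walks `u → t` with walks `t → v`. For `t = v` this expresses the
number of walks `u → v` through first-passage counts and the return counts at `v`. Walk counts
`u → v` and `v → u` agree by reversal, and an automorphism taking `o` to `x` makes the return
counts at `o` and at `x` agree, so this triangular system (whose diagonal is the single walk of
length `0`) forces the first-passage counts `o → x` and `x → o` to agree. The convolution for
closed walks then gives the theorem.
-/

open Finset SimpleGraph

theorem eq_of_forall_sum_range_mul_sub_eq {R : Type*} [Semiring R] [IsLeftCancelAdd R]
    {a b c : ℕ → R} (hc : c 0 = 1)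
    (h : ∀ n, ∑ k ∈ range (n + 1), a k * c (n - k) = ∑ k ∈ range (n + 1), b k * c (n - k)) :
    a = b := by
  funext n
  induction n using Nat.strong_induction_on with
  | _ n ih =>
    have hlower : ∑ k ∈ range n, a k * c (n - k) = ∑ k ∈ range n, b k * c (n - k) :=
      sum_congr rfl fun k hk => by rw [ih k (mem_range.1 hk)]
    have hn := h n
    rwa [sum_range_succ, sum_range_succ, hlower, Nat.sub_self, hc, mul_one, mul_one,
      add_left_cancel_iff] at hn

namespace SimpleGraph

namespace Walk

variable {V : Type*} [DecidableEq V] {G : SimpleGraph V}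

lemma takeUntil_append_dropUntil_append_of_count_support_eq_one {u t v : V}
    (p : G.Walk u t) (q : G.Walk t v) (hp : p.support.count t = 1)
    (h : t ∈ (p.append q).support) :
    (p.append q).takeUntil t h = p ∧ (p.append q).dropUntil t h = q := by
  induction p with
  | nil => exact ⟨takeUntil_first q, dropUntil_first q h⟩
  | @cons u _ t _ p ih =>
    have hut : u ≠ t := by
      rintro rfl
      have := List.count_pos_iff.2 p.end_mem_support
      simp only [support_cons, List.count_cons_self] at hp
      omega
    have hp' : p.support.count t = 1 := by simpa [List.count_cons, hut] using hp
    obtain ⟨htake, hdrop⟩ := ih q hp' (by simp)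
    simp only [cons_append, takeUntil, dropUntil, dif_neg hut, htake, hdrop, and_self]

end Walk

variable {V : Type*} [DecidableEq V] (G : SimpleGraph V) [G.LocallyFinite]

def finsetFirstPassageWalkLength (n : ℕ) (u v : V) : Finset (G.Walk u v) :=
  {w ∈ G.finsetWalkLength n u v | w.support.count v = 1}

lemma card_finsetWalkLength_comm (n : ℕ) (u v : V) :
    #(G.finsetWalkLength n u v) = #(G.finsetWalkLength n v u) :=
  card_nbij' Walk.reverse Walk.reverse (by simp [Set.MapsTo, mem_finsetWalkLength_iff])
    (by simp [Set.MapsTo, mem_finsetWalkLength_iff])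
    (by simp [Set.LeftInvOn]) (by simp [Set.LeftInvOn])

lemma card_finsetWalkLength_le_of_embedding {W : Type*} [DecidableEq W] {G' : SimpleGraph W}
    [G'.LocallyFinite] (f : G ↪g G') (n : ℕ) (u v : V) :
    #(G.finsetWalkLength n u v) ≤ #(G'.finsetWalkLength n (f u) (f v)) :=
  card_le_card_of_injOn (Walk.map f.toHom) (by simp [Set.MapsTo, mem_finsetWalkLength_iff])
    (Walk.map_injective_of_injective f.injective u v).injOn

lemma card_finsetWalkLength_iso {W : Type*} [DecidableEq W] {G' : SimpleGraph W}
    [G'.LocallyFinite] (φ : G ≃g G') (n : ℕ) (u v : V) :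
    #(G'.finsetWalkLength n (φ u) (φ v)) = #(G.finsetWalkLength n u v) := by
  refine le_antisymm ?_ (card_finsetWalkLength_le_of_embedding G φ.toEmbedding n u v)
  have h := card_finsetWalkLength_le_of_embedding G' φ.symm.toEmbedding n (φ u) (φ v)
  rwa [RelIso.coe_toRelEmbedding, φ.symm_apply_apply, φ.symm_apply_apply] at h

lemma card_filter_mem_support_finsetWalkLength (n : ℕ) (u v t : V) :
    #{w ∈ G.finsetWalkLength n u v | t ∈ w.support} =
      ∑ k ∈ range (n + 1),
        #(G.finsetFirstPassageWalkLength k u t) * #(G.finsetWalkLength (n - k) t v) := by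
  simp only [← card_product, ← card_sigma]
  refine card_bij' (fun w hw => ⟨(w.takeUntil t (mem_filter.1 hw).2).length,
      (w.takeUntil t (mem_filter.1 hw).2, w.dropUntil t (mem_filter.1 hw).2)⟩)
    (fun z _ => z.2.1.append z.2.2) ?_ ?_ (fun w _ => w.take_spec _) ?_
  · intro w hw
    have ht := (mem_filter.1 hw).2
    have hlen := mem_finsetWalkLength_iff.1 (mem_filter.1 hw).1
    have hsplit := congrArg Walk.length (w.take_spec ht)
    rw [Walk.length_append, hlen] at hsplit
    simp only [mem_sigma, mem_range, mem_product, finsetFirstPassageWalkLength, mem_filter,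
      mem_finsetWalkLength_iff, w.count_support_takeUntil_eq_one ht, and_self, true_and]
    omega
  · rintro ⟨k, p, q⟩ hz
    simp only [mem_sigma, mem_range, mem_product, finsetFirstPassageWalkLength, mem_filter,
      mem_finsetWalkLength_iff] at hz
    simp only [mem_filter, mem_finsetWalkLength_iff, Walk.length_append, Walk.mem_support_append_iff,
      Walk.end_mem_support, true_or, and_true]
    omega
  · rintro ⟨k, p, q⟩ hz
    simp only [mem_sigma, mem_range, mem_product, finsetFirstPassageWalkLength, mem_filter,
      mem_finsetWalkLength_iff] at hz
    obtain ⟨-, ⟨rfl, hp⟩, -⟩ := hz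
    obtain ⟨htake, hdrop⟩ :=
      Walk.takeUntil_append_dropUntil_append_of_count_support_eq_one p q hp (by simp)
    simp only [htake, hdrop]

lemma card_finsetWalkLength_eq_sum (n : ℕ) (u v : V) :
    #(G.finsetWalkLength n u v) = ∑ k ∈ range (n + 1),
        #(G.finsetFirstPassageWalkLength k u v) * #(G.finsetWalkLength (n - k) v v) := by
  rw [← card_filter_mem_support_finsetWalkLength,
    filter_true_of_mem fun w _ => w.end_mem_support]

lemma card_finsetFirstPassageWalkLength_comm {u v : V}
    (hloops : ∀ m, #(G.finsetWalkLength m u u) = #(G.finsetWalkLength m v v)) (n : ℕ) :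
    #(G.finsetFirstPassageWalkLength n u v) = #(G.finsetFirstPassageWalkLength n v u) := by
  suffices h : (fun k => #(G.finsetFirstPassageWalkLength k u v)) =
      fun k => #(G.finsetFirstPassageWalkLength k v u) from congrFun h n
  refine eq_of_forall_sum_range_mul_sub_eq (c := fun m => #(G.finsetWalkLength m v v))
    (by simp [finsetWalkLength]) fun m => ?_
  rw [← card_finsetWalkLength_eq_sum, card_finsetWalkLength_comm, card_finsetWalkLength_eq_sum]
  simp only [hloops]

end SimpleGraph

theorem stmt11_general {V : Type*} [DecidableEq V] (G : SimpleGraph V) [G.LocallyFinite]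
    (htrans : ∀ x y : V, ∃ φ : G ≃g G, φ x = y)
    (o x : V) (n : ℕ) :
    ((G.finsetWalkLength n o o).filter (fun w => x ∈ w.support)).card =
      ((G.finsetWalkLength n x x).filter (fun w => o ∈ w.support)).card := by
  obtain ⟨φ, hφ⟩ := htrans o x
  have hloops : ∀ m, #(G.finsetWalkLength m o o) = #(G.finsetWalkLength m x x) := fun m => by
    rw [← hφ, card_finsetWalkLength_iso]
  rw [card_filter_mem_support_finsetWalkLength, card_filter_mem_support_finsetWalkLength]
  refine sum_congr rfl fun k _ => ?_
  rw [card_finsetFirstPassageWalkLength_comm G hloops, card_finsetWalkLength_comm G _ o x]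

/-- In a locally finite, connected, vertex-transitive graph, for vertices
`o, x` and `n ≥ 1`, the number of closed walks of length `n` based at `o` that visit `x`
equals the number of closed walks of length `n` based at `x` that visit `o`. -/
theorem stmt11 {V : Type*} [DecidableEq V] (G : SimpleGraph V) [G.LocallyFinite]
    (hconn : G.Connected) [Infinite V]
    (htrans : ∀ x y : V, ∃ φ : G ≃g G, φ x = y)
    (o x : V) (n : ℕ) (hn : 1 ≤ n) :
    ((G.finsetWalkLength n o o).filter (fun w => x ∈ w.support)).card =
      ((G.finsetWalkLength n x x).filter (fun w => o ∈ w.support)).card :=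
  stmt11_general G htrans o x n
end

section
/- Let G = (V,E) be a locally finite, connected, vertex-transitive graph with spectral radius ρ. Then there exist a constant c_1 > 0 and an integer n_1 ≥ 0 such that for all integers k ≥ 1 and n ≥ 2k + n_1: u_{n−2k} ≥ c_1·u_n·ρ^{−2k}. -/
open SimpleGraph Filter

attribute [local instance] Classical.propDecidable

/-- The weight of a closed walk: product of `1/deg(w_i)` over all vertices of the walk
except the last one. -/
noncomputable def walkWeight {V : Type*} (G : SimpleGraph V) [G.LocallyFinite] {x : V}
    (w : G.Walk x x) : ℝ :=
  (w.support.dropLast.map fun v => (1 : ℝ) / (G.degree v)).prod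

/-- The `n`-step return probability of simple random walk at `x`. -/
noncomputable def returnProb {V : Type*} [DecidableEq V] (G : SimpleGraph V) [G.LocallyFinite]
    (x : V) (n : ℕ) : ℝ :=
  ∑ w ∈ G.finsetWalkLength n x x, walkWeight G w
/-!
Vertex-transitivity makes `G` regular of some degree `d`, so `u_n = W_n / d^n`, where `W_n`
counts the closed walks of length `n` at any vertex. Concatenating walks gives
`u_a u_b ≤ u_{a+b}`, and splitting walks at the midpoint and applying Cauchy–Schwarz (walk counts
are symmetric) gives `u_{a+b}² ≤ u_{2a} u_{2b}`. Supermultiplicativity forces `u_m ≤ ρ^m`. The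
second inequality makes `j ↦ u_{2j}` log-convex, so its ratios increase; a ratio above `ρ²` would
make `u_{2j}` eventually exceed `ρ^{2j}`, hence `u_{2j+i} ≤ ρ^i u_{2j}` for all `i`. This settles
even `n - 2k` with `c₁ = 1`. For odd `n - 2k`, fix an odd `l` with `u_l > 0` (if there is none,
`u_n = 0`) and write `n - 2k = 2j + l`: then `u_{n-2k} ≥ u_{2j} u_l ≥ u_l ρ^{-l} · ρ^{-2k} u_n`.
-/

namespace SimpleGraph

variable {V W : Type*} {G : SimpleGraph V}

namespace Walk

theorem append_inj {x y z : V} {p p' : G.Walk x y} {q q' : G.Walk y z}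
    (h : p.append q = p'.append q') (hl : p.length = p'.length) : p = p' ∧ q = q' := by
  induction p with
  | nil =>
    cases p' with
    | nil => exact ⟨rfl, h⟩
    | cons _ _ => simp at hl
  | cons _ r ih =>
    cases p' with
    | nil => simp at hl
    | cons _ r' =>
      simp only [cons_append, cons.injEq] at h
      obtain ⟨rfl, h⟩ := h
      obtain ⟨rfl, rfl⟩ := ih (eq_of_heq h) (by simpa using hl)
      exact ⟨rfl, rfl⟩

end Walk

variable [DecidableEq V] [G.LocallyFinite]

variable (G) in
def numWalks (n : ℕ) (x y : V) : ℕ := (G.finsetWalkLength n x y).card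

theorem numWalks_comm (n : ℕ) (x y : V) : G.numWalks n x y = G.numWalks n y x := by
  refine Finset.card_nbij' Walk.reverse Walk.reverse ?_ ?_ ?_ ?_ <;>
    simp [Set.MapsTo, Set.LeftInvOn, mem_finsetWalkLength_iff]

theorem numWalks_mul_le_add (a b : ℕ) (x y z : V) :
    G.numWalks a x y * G.numWalks b y z ≤ G.numWalks (a + b) x z := by
  rw [numWalks, numWalks, ← Finset.card_product]
  refine Finset.card_le_card_of_injOn (fun pq => pq.1.append pq.2) ?_ ?_
  · rintro ⟨p, q⟩ hpq
    simp_all [mem_finsetWalkLength_iff]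
  · rintro ⟨p, q⟩ hpq ⟨p', q'⟩ hpq' h
    simp only [Finset.coe_product, Set.mem_prod, Finset.mem_coe, mem_finsetWalkLength_iff]
      at hpq hpq'
    obtain ⟨rfl, rfl⟩ := Walk.append_inj h (hpq.1.trans hpq'.1.symm)
    rfl

theorem numWalks_add_eq_sum (a b : ℕ) (x z : V) (T : Finset V)
    (hT : ∀ w ∈ G.finsetWalkLength (a + b) x z, w.getVert a ∈ T) :
    G.numWalks (a + b) x z = ∑ y ∈ T, G.numWalks a x y * G.numWalks b y z := by
  rw [numWalks, Finset.card_eq_sum_card_fiberwise hT]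
  refine Finset.sum_congr rfl fun y _ => ?_
  rw [numWalks, numWalks, ← Finset.card_product]
  symm
  refine Finset.card_bij (fun pq _ => pq.1.append pq.2) ?_ ?_ ?_
  · rintro ⟨p, q⟩ hpq
    simp only [Finset.mem_product, mem_finsetWalkLength_iff] at hpq
    simp [mem_finsetWalkLength_iff, Walk.getVert_append, hpq]
  · rintro ⟨p, q⟩ hpq ⟨p', q'⟩ hpq' h
    simp only [Finset.mem_product, mem_finsetWalkLength_iff] at hpq hpq'
    obtain ⟨rfl, rfl⟩ := Walk.append_inj h (hpq.1.trans hpq'.1.symm)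
    rfl
  · intro w hw
    simp only [Finset.mem_filter, mem_finsetWalkLength_iff] at hw
    obtain ⟨hlen, rfl⟩ := hw
    refine ⟨(w.take a, w.drop a), ?_, w.append_take_drop_eq a⟩
    simp [mem_finsetWalkLength_iff, hlen]

theorem numWalks_add_sq_le (a b : ℕ) (x y : V) :
    G.numWalks (a + b) x y ^ 2 ≤ G.numWalks (2 * a) x x * G.numWalks (2 * b) y y := by
  set T := ((G.finsetWalkLength (a + b) x y).image (·.getVert a)) ∪
    ((G.finsetWalkLength (a + a) x x).image (·.getVert a)) ∪
    ((G.finsetWalkLength (b + b) y y).image (·.getVert b))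
  have hab := numWalks_add_eq_sum (G := G) a b x y T fun w hw =>
    Finset.mem_union_left _ (Finset.mem_union_left _ (Finset.mem_image_of_mem _ hw))
  have haa := numWalks_add_eq_sum (G := G) a a x x T fun w hw =>
    Finset.mem_union_left _ (Finset.mem_union_right _ (Finset.mem_image_of_mem _ hw))
  have hbb := numWalks_add_eq_sum (G := G) b b y y T fun w hw =>
    Finset.mem_union_right _ (Finset.mem_image_of_mem _ hw)
  rw [two_mul, two_mul, hab, haa, hbb]
  simp only [numWalks_comm a _ x, numWalks_comm b y, ← sq]
  exact Finset.sum_mul_sq_le_sq_mul_sq T _ _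

theorem numWalks_le_pow {d : ℕ} (hd : ∀ v, G.degree v ≤ d) (n : ℕ) (x y : V) :
    G.numWalks n x y ≤ d ^ n := by
  induction n generalizing x with
  | zero => unfold numWalks finsetWalkLength; split <;> [subst_vars; skip] <;> simp
  | succ n ih =>
    calc G.numWalks (n + 1) x y
        ≤ ∑ w : G.neighborSet x, G.numWalks n w y := by
          rw [numWalks, finsetWalkLength]
          exact Finset.card_biUnion_le.trans_eq (by simp [numWalks])
      _ ≤ ∑ _w : G.neighborSet x, d ^ n := Finset.sum_le_sum fun w _ => ih w
      _ ≤ d ^ (n + 1) := by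
          rw [Finset.sum_const, Finset.card_univ, card_neighborSet_eq_degree, smul_eq_mul,
            pow_succ']
          exact Nat.mul_le_mul_right _ (hd x)

theorem numWalks_le_of_injective {G' : SimpleGraph W} [DecidableEq W] [G'.LocallyFinite]
    (f : G →g G') (hf : Function.Injective f) (n : ℕ) (x y : V) :
    G.numWalks n x y ≤ G'.numWalks n (f x) (f y) :=
  Finset.card_le_card_of_injOn (Walk.map f) (fun w hw => by simp_all [mem_finsetWalkLength_iff])
    (Walk.map_injective_of_injective hf x y).injOn

theorem Iso.numWalks_eq {G' : SimpleGraph W} [DecidableEq W] [G'.LocallyFinite]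
    (φ : G ≃g G') (n : ℕ) (x y : V) : G'.numWalks n (φ x) (φ y) = G.numWalks n x y := by
  refine le_antisymm ?_ (numWalks_le_of_injective φ.toHom φ.injective n x y)
  simpa using numWalks_le_of_injective φ.symm.toHom φ.symm.injective n (φ x) (φ y)

end SimpleGraph

section ReturnSequences

variable {u v : ℕ → ℝ} {ρ r : ℝ}

theorem le_pow_of_limsup_rpow_inv_eq (hu0 : ∀ n, 0 ≤ u n) (hu1 : ∀ n, u n ≤ 1)
    (hsm : ∀ a b, u a * u b ≤ u (a + b))
    (hρ : limsup (fun n : ℕ => u n ^ (n : ℝ)⁻¹) atTop = ρ) (m : ℕ) : u m ≤ ρ ^ m := by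
  rcases Nat.eq_zero_or_pos m with rfl | hm
  · simpa using hu1 0
  have hpow : ∀ N, u m ^ (N + 1) ≤ u (m * (N + 1)) := by
    intro N
    induction N with
    | zero => simp
    | succ N ih =>
      rw [pow_succ, mul_add_one m (N + 1)]
      exact (mul_le_mul_of_nonneg_right ih (hu0 m)).trans (hsm _ _)
  have hbdd : IsBoundedUnder (· ≤ ·) atTop (fun n : ℕ => u n ^ (n : ℝ)⁻¹) :=
    isBoundedUnder_of ⟨1, fun n => Real.rpow_le_one (hu0 n) (hu1 n) (by positivity)⟩
  have hroot : u m ^ (m : ℝ)⁻¹ ≤ ρ := by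
    rw [← hρ]
    refine le_limsup_of_frequently_le (frequently_atTop.2 fun N => ⟨m * (N + 1), ?_, ?_⟩) hbdd
    · nlinarith
    · calc u m ^ (m : ℝ)⁻¹ = (u m ^ (N + 1)) ^ ((m * (N + 1) : ℕ) : ℝ)⁻¹ := by
            rw [← Real.rpow_natCast, ← Real.rpow_mul (hu0 m)]
            push_cast
            field_simp
        _ ≤ _ := Real.rpow_le_rpow (pow_nonneg (hu0 m) _) (hpow N) (by positivity)
  calc u m = (u m ^ (m : ℝ)⁻¹) ^ m := (Real.rpow_inv_natCast_pow (hu0 m) hm.ne').symm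
    _ ≤ ρ ^ m := pow_le_pow_left₀ (Real.rpow_nonneg (hu0 m) _) hroot m

theorem monotone_div_of_sq_le_mul (hpos : ∀ j, 0 < v j)
    (hconv : ∀ j, v (j + 1) ^ 2 ≤ v j * v (j + 2)) : Monotone fun j => v (j + 1) / v j :=
  monotone_nat_of_le_succ fun j => by
    rw [div_le_div_iff₀ (hpos j) (hpos (j + 1)), ← sq]
    simpa [mul_comm] using hconv j

theorem mul_div_pow_le_of_sq_le_mul (hpos : ∀ j, 0 < v j)
    (hconv : ∀ j, v (j + 1) ^ 2 ≤ v j * v (j + 2)) (j i : ℕ) :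
    v j * (v (j + 1) / v j) ^ i ≤ v (j + i) := by
  induction i with
  | zero => simp
  | succ i ih =>
    have hratio := monotone_div_of_sq_le_mul hpos hconv (Nat.le_add_right j i)
    calc v j * (v (j + 1) / v j) ^ (i + 1)
        = v j * (v (j + 1) / v j) ^ i * (v (j + 1) / v j) := by ring
      _ ≤ v (j + i) * (v (j + i + 1) / v (j + i)) :=
          mul_le_mul ih hratio (div_pos (hpos _) (hpos _)).le (hpos _).le
      _ = v (j + (i + 1)) := by
          rw [mul_div_cancel₀ _ (hpos _).ne', add_assoc]

theorem le_pow_mul_of_sq_le_mul (hpos : ∀ j, 0 < v j)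
    (hconv : ∀ j, v (j + 1) ^ 2 ≤ v j * v (j + 2)) (hle : ∀ j, v j ≤ r ^ j) (j k : ℕ) :
    v (j + k) ≤ r ^ k * v j := by
  have hr : 0 < r := (hpos 1).trans_le (by simpa using hle 1)
  have hstep : ∀ j, v (j + 1) ≤ r * v j := by
    intro j
    by_contra! h
    have hgrow : 1 < v (j + 1) / v j / r := by
      rwa [lt_div_iff₀ hr, one_mul, lt_div_iff₀ (hpos j)]
    obtain ⟨i, hi⟩ := pow_unbounded_of_one_lt (r ^ j / v j) hgrow
    have := (mul_div_pow_le_of_sq_le_mul hpos hconv j i).trans (hle (j + i))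
    rw [div_pow, lt_div_iff₀ (by positivity), div_mul_eq_mul_div, div_lt_iff₀ (hpos j),
      mul_comm, ← pow_add, add_comm i j] at hi
    linarith
  induction k with
  | zero => simp
  | succ k ih =>
    calc v (j + (k + 1)) ≤ r * v (j + k) := hstep (j + k)
      _ ≤ r * (r ^ k * v j) := mul_le_mul_of_nonneg_left ih hr.le
      _ = r ^ (k + 1) * v j := by ring

theorem le_pow_mul_of_supermul_of_sq_le (hu0 : ∀ n, 0 ≤ u n) (hu1 : ∀ n, u n ≤ 1)
    (hu_zero : u 0 = 1) (hu2 : 0 < u 2) (hsm : ∀ a b, u a * u b ≤ u (a + b))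
    (hcs : ∀ a b, u (a + b) ^ 2 ≤ u (2 * a) * u (2 * b))
    (hρ : limsup (fun n : ℕ => u n ^ (n : ℝ)⁻¹) atTop = ρ) (j i : ℕ) :
    u (2 * j + i) ≤ ρ ^ i * u (2 * j) := by
  have heven_pos : ∀ j, 0 < u (2 * j) := by
    intro j
    induction j with
    | zero => simp [hu_zero]
    | succ j ih => exact (mul_pos ih hu2).trans_le (hsm _ _)
  have hle := le_pow_of_limsup_rpow_inv_eq hu0 hu1 hsm hρ
  have hρ0 : 0 ≤ ρ := (hu0 1).trans (by simpa using hle 1)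
  have heven : ∀ j k, u (2 * (j + k)) ≤ ρ ^ (2 * k) * u (2 * j) := fun j k => by
    simpa only [pow_mul] using le_pow_mul_of_sq_le_mul (v := fun j => u (2 * j)) heven_pos
      (fun j => by convert hcs j (j + 2) using 3; ring)
      (fun j => by simpa only [pow_mul] using hle (2 * j)) j k
  obtain ⟨a, rfl | rfl⟩ := Nat.even_or_odd' i
  · simpa only [mul_add] using heven j a
  · have hsq : u (2 * j + (2 * a + 1)) ^ 2 ≤ (ρ ^ (2 * a + 1) * u (2 * j)) ^ 2 :=
      calc u (2 * j + (2 * a + 1)) ^ 2 ≤ u (2 * (j + a)) * u (2 * (j + (a + 1))) := by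
            convert hcs (j + a) (j + a + 1) using 3 <;> ring
        _ ≤ (ρ ^ (2 * a) * u (2 * j)) * (ρ ^ (2 * (a + 1)) * u (2 * j)) :=
            mul_le_mul (heven j a) (heven j (a + 1)) (hu0 _) (mul_nonneg (by positivity) (hu0 _))
        _ = (ρ ^ (2 * a + 1) * u (2 * j)) ^ 2 := by ring
    exact (pow_le_pow_iff_left₀ (hu0 _) (mul_nonneg (by positivity) (hu0 _)) two_ne_zero).1 hsq

theorem exists_mul_le_of_supermul_of_sq_le (hu0 : ∀ n, 0 ≤ u n) (hu1 : ∀ n, u n ≤ 1)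
    (hu_zero : u 0 = 1) (hu2 : 0 < u 2) (hsm : ∀ a b, u a * u b ≤ u (a + b))
    (hcs : ∀ a b, u (a + b) ^ 2 ≤ u (2 * a) * u (2 * b))
    (hρ : limsup (fun n : ℕ => u n ^ (n : ℝ)⁻¹) atTop = ρ) :
    ∃ (c : ℝ) (n₁ : ℕ), 0 < c ∧ ∀ k n : ℕ, 2 * k + n₁ ≤ n →
      c * u n * (ρ ^ (2 * k))⁻¹ ≤ u (n - 2 * k) := by
  have key := le_pow_mul_of_supermul_of_sq_le hu0 hu1 hu_zero hu2 hsm hcs hρ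
  have hρ_pos : 0 < ρ := by
    have h1 := key 0 1
    have h2 := key 0 2
    simp only [mul_zero, zero_add, hu_zero, mul_one, pow_one] at h1 h2
    refine lt_of_pow_lt_pow_left₀ 2 ((hu0 1).trans h1) ?_
    rw [zero_pow two_ne_zero]
    exact hu2.trans_le h2
  have hcancel : ∀ c, c ≤ 1 → ∀ k j, c * u (2 * k + 2 * j) * (ρ ^ (2 * k))⁻¹ ≤ u (2 * j) := by
    intro c hc k j
    rw [mul_assoc, ← div_eq_mul_inv, add_comm]
    refine (mul_le_of_le_one_left (by positivity [hu0 (2 * j + 2 * k)]) hc).trans ?_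
    rw [div_le_iff₀ (by positivity)]
    exact (key j (2 * k)).trans_eq (mul_comm _ _)
  by_cases hodd : ∃ l, Odd l ∧ 0 < u l
  · obtain ⟨l, hl_odd, hl_pos⟩ := hodd
    refine ⟨min 1 (u l / ρ ^ l), l, lt_min one_pos (by positivity), fun k n hn => ?_⟩
    obtain ⟨m, rfl⟩ := Nat.exists_eq_add_of_le hn
    rcases Nat.even_or_odd' m with ⟨j, rfl | rfl⟩
    · rw [show 2 * k + l + 2 * j = 2 * j + (l + 2 * k) by ring,
        show 2 * j + (l + 2 * k) - 2 * k = 2 * j + l by omega]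
      calc _ ≤ u l / ρ ^ l * (ρ ^ (l + 2 * k) * u (2 * j)) * (ρ ^ (2 * k))⁻¹ := by
            gcongr
            exacts [hu0 _, min_le_right _ _, key j _]
        _ = u (2 * j) * u l := by
            rw [pow_add]
            field_simp
        _ ≤ u (2 * j + l) := hsm _ _
    · obtain ⟨a, rfl⟩ := hl_odd
      rw [show 2 * k + (2 * a + 1) + (2 * j + 1) = 2 * k + 2 * (a + j + 1) by ring,
        Nat.add_sub_cancel_left]
      exact hcancel _ (min_le_left _ _) k _
  · push Not at hodd
    refine ⟨1, 0, one_pos, fun k n hn => ?_⟩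
    obtain ⟨m, rfl⟩ := Nat.exists_eq_add_of_le (Nat.add_zero _ ▸ hn)
    rcases Nat.even_or_odd' m with ⟨j, rfl | rfl⟩
    · rw [Nat.add_sub_cancel_left]
      exact hcancel 1 le_rfl k j
    · have hzero : u (2 * k + (2 * j + 1)) = 0 :=
        le_antisymm (hodd _ ⟨k + j, by ring⟩) (hu0 _)
      rw [hzero, mul_zero, zero_mul]
      exact hu0 _

end ReturnSequences

section RegularGraphs

variable {V : Type*} {G : SimpleGraph V} [G.LocallyFinite] {d : ℕ}

theorem walkWeight_eq_of_isRegularOfDegree (hG : G.IsRegularOfDegree d) {x : V}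
    (w : G.Walk x x) : walkWeight G w = (1 / (d : ℝ)) ^ w.length := by
  rw [walkWeight, List.prod_eq_pow_card _ (1 / (d : ℝ)) (by simp [hG.degree_eq])]
  simp

variable [DecidableEq V]

theorem returnProb_zero (x : V) : returnProb G x 0 = 1 := by
  simp [returnProb, finsetWalkLength, walkWeight]

theorem returnProb_nonneg (x : V) (n : ℕ) : 0 ≤ returnProb G x n :=
  Finset.sum_nonneg fun w _ => List.prod_nonneg fun a ha => by
    obtain ⟨v, -, rfl⟩ := List.mem_map.1 ha
    positivity

theorem returnProb_eq_numWalks (hG : G.IsRegularOfDegree d) (x : V) (n : ℕ) :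
    returnProb G x n = G.numWalks n x x * (1 / (d : ℝ)) ^ n := by
  rw [returnProb, numWalks, Finset.sum_congr rfl fun w hw => by
    rw [walkWeight_eq_of_isRegularOfDegree hG, mem_finsetWalkLength_iff.1 hw]]
  simp

theorem returnProb_le_one (hG : G.IsRegularOfDegree d) (hd : 0 < d) (x : V) (n : ℕ) :
    returnProb G x n ≤ 1 := by
  rw [returnProb_eq_numWalks hG]
  calc (G.numWalks n x x : ℝ) * (1 / (d : ℝ)) ^ n ≤ (d : ℝ) ^ n * (1 / (d : ℝ)) ^ n := by
        gcongr
        exact_mod_cast numWalks_le_pow (fun v => (hG.degree_eq v).le) n x x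
    _ = 1 := by rw [← mul_pow, mul_one_div_cancel (by positivity), one_pow]

theorem returnProb_mul_le_add (hG : G.IsRegularOfDegree d) (x : V) (a b : ℕ) :
    returnProb G x a * returnProb G x b ≤ returnProb G x (a + b) := by
  simp only [returnProb_eq_numWalks hG, pow_add]
  calc (G.numWalks a x x : ℝ) * (1 / (d : ℝ)) ^ a * (G.numWalks b x x * (1 / (d : ℝ)) ^ b)
      = (G.numWalks a x x * G.numWalks b x x : ℕ) *
          ((1 / (d : ℝ)) ^ a * (1 / (d : ℝ)) ^ b) := by
        push_cast
        ring
    _ ≤ G.numWalks (a + b) x x * ((1 / (d : ℝ)) ^ a * (1 / (d : ℝ)) ^ b) := by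
        gcongr
        exact numWalks_mul_le_add a b x x x

theorem returnProb_add_sq_le (hG : G.IsRegularOfDegree d) (x : V) (a b : ℕ) :
    returnProb G x (a + b) ^ 2 ≤ returnProb G x (2 * a) * returnProb G x (2 * b) := by
  simp only [returnProb_eq_numWalks hG]
  calc ((G.numWalks (a + b) x x : ℝ) * (1 / (d : ℝ)) ^ (a + b)) ^ 2
      = (G.numWalks (a + b) x x ^ 2 : ℕ) * (1 / (d : ℝ)) ^ (2 * a + 2 * b) := by
        push_cast
        ring
    _ ≤ (G.numWalks (2 * a) x x * G.numWalks (2 * b) x x : ℕ) *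
          (1 / (d : ℝ)) ^ (2 * a + 2 * b) := by
        gcongr
        exact numWalks_add_sq_le a b x x
    _ = _ := by
        push_cast
        ring

theorem returnProb_two_pos (hG : G.IsRegularOfDegree d) (hd : 0 < d) (x : V) :
    0 < returnProb G x 2 := by
  obtain ⟨y, hxy⟩ : ∃ y, G.Adj x y := by
    simpa [← G.degree_pos_iff_exists_adj, hG.degree_eq] using hd
  have hwalk : 0 < G.numWalks 2 x x :=
    Finset.card_pos.2 ⟨.cons hxy (.cons hxy.symm .nil), mem_finsetWalkLength_iff.2 rfl⟩
  rw [returnProb_eq_numWalks hG]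
  positivity

theorem returnProb_iso (hG : G.IsRegularOfDegree d) (φ : G ≃g G) (x : V) (n : ℕ) :
    returnProb G (φ x) n = returnProb G x n := by
  rw [returnProb_eq_numWalks hG, returnProb_eq_numWalks hG, φ.numWalks_eq]

end RegularGraphs

theorem stmt13_general {V : Type*} [DecidableEq V] (G : SimpleGraph V) [G.LocallyFinite]
    (htrans : ∀ x y : V, ∃ φ : G ≃g G, φ x = y)
    (ρ : ℝ)
    (hρ : ∀ x : V,
      Filter.limsup (fun n : ℕ => (returnProb G x n) ^ ((n : ℝ)⁻¹)) Filter.atTop = ρ) :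
    ∃ (c₁ : ℝ) (n₁ : ℕ), 0 < c₁ ∧ ∀ (x : V) (k n : ℕ), 1 ≤ k → 2 * k + n₁ ≤ n →
      c₁ * returnProb G x n * (ρ ^ (2 * k))⁻¹ ≤ returnProb G x (n - 2 * k) := by
  rcases isEmpty_or_nonempty V with _ | ⟨⟨x₀⟩⟩
  · exact ⟨1, 0, one_pos, fun x => isEmptyElim x⟩
  have hG : G.IsRegularOfDegree (G.degree x₀) := fun v => by
    obtain ⟨φ, rfl⟩ := htrans x₀ v
    exact φ.degree_eq x₀
  have hu : ∀ x, returnProb G x = returnProb G x₀ := fun x => by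
    obtain ⟨φ, rfl⟩ := htrans x₀ x
    exact funext (returnProb_iso hG φ x₀)
  simp only [hu]
  rcases (G.degree x₀).eq_zero_or_pos with hd | hd
  · refine ⟨1, 0, one_pos, fun _ k n hk hn => ?_⟩
    have hvanish : returnProb G x₀ n = 0 := by
      rw [returnProb_eq_numWalks hG, hd, Nat.cast_zero, div_zero, zero_pow (by omega), mul_zero]
    rw [hvanish, mul_zero, zero_mul]
    exact returnProb_nonneg x₀ _
  obtain ⟨c, n₁, hc, h⟩ := exists_mul_le_of_supermul_of_sq_le (returnProb_nonneg x₀)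
    (returnProb_le_one hG hd x₀) (returnProb_zero x₀) (returnProb_two_pos hG hd x₀)
    (returnProb_mul_le_add hG x₀) (returnProb_add_sq_le hG x₀) (hρ x₀)
  exact ⟨c, n₁, hc, fun _ k n _ hn => h k n hn⟩

/-- Let `G` be a locally finite, connected, infinite, vertex-transitive graph
with spectral radius `ρ`. Then there are `c₁ > 0` and `n₁ ≥ 0` such that for all `k ≥ 1` and
`n ≥ 2k + n₁`: `u_{n-2k} ≥ c₁·u_n·ρ^{-2k}`. -/
theorem stmt13 {V : Type*} [DecidableEq V] (G : SimpleGraph V) [G.LocallyFinite]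
    (hconn : G.Connected) [Infinite V]
    (htrans : ∀ x y : V, ∃ φ : G ≃g G, φ x = y)
    (ρ : ℝ)
    (hρ : ∀ x : V,
      Filter.limsup (fun n : ℕ => (returnProb G x n) ^ ((n : ℝ)⁻¹)) Filter.atTop = ρ) :
    ∃ (c₁ : ℝ) (n₁ : ℕ), 0 < c₁ ∧ ∀ (x : V) (k n : ℕ), 1 ≤ k → 2 * k + n₁ ≤ n →
      c₁ * returnProb G x n * (ρ ^ (2 * k))⁻¹ ≤ returnProb G x (n - 2 * k) :=
  stmt13_general G htrans ρ hρ
end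

section
/- Let ρ ∈ (0,1], α > 1, and let u : ℕ → [0,∞) be a sequence such that there are constants 0 < c ≤ C with c·ρ^{2n}·n^{−α} ≤ u_{2n} ≤ C·ρ^{2n}·n^{−α} for all n ≥ 1, and such that either u_{2n+1} = 0 for all n ≥ 0, or lim_{n→∞} u_{n+1}/u_n = ρ. Then for every ε > 0 there exists N > 0 such that for all n ≥ 2N: Σ_{i=N}^{n−N} u_i·u_{n−i} ≤ ε·u_n. -/
open Filter

private lemma rpow_div_helper (x d α : ℝ) (hx : 0 < x) (hd : 0 < d) :
    (x / d) ^ (-α) = d ^ α * x ^ (-α) := by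
  rw [Real.div_rpow hx.le hd.le, Real.rpow_neg hd.le, div_eq_mul_inv, inv_inv, mul_comm]

/-- If `n ≤ 4m` (all at least 1) then `m^{-α} ≤ 4^α n^{-α}`. -/
private lemma base_cmp (α : ℝ) (hα : 0 < α) (m n : ℕ) (hm : 1 ≤ m) (hn : 1 ≤ n)
    (h : (n : ℝ) ≤ 4 * m) : (m : ℝ) ^ (-α) ≤ 4 ^ α * (n : ℝ) ^ (-α) := by
  have hn0 : (0:ℝ) < n := by exact_mod_cast hn
  have h1 : (0:ℝ) < (n : ℝ) / 4 := by linarith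
  have h2 : ((n : ℝ) / 4) ≤ m := by linarith
  calc (m : ℝ) ^ (-α) ≤ ((n : ℝ) / 4) ^ (-α) :=
        Real.rpow_le_rpow_of_nonpos h1 h2 (neg_nonpos.2 hα.le)
    _ = 4 ^ α * (n : ℝ) ^ (-α) := rpow_div_helper _ _ _ hn0 (by norm_num)

/-- If `1 ≤ m ≤ n` then `n^{-α} ≤ m^{-α}`. -/
private lemma base_anti (α : ℝ) (hα : 0 < α) (m n : ℕ) (hm : 1 ≤ m) (h : m ≤ n) :
    (n : ℝ) ^ (-α) ≤ (m : ℝ) ^ (-α) := by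
  have hm0 : (0:ℝ) < m := by exact_mod_cast hm
  exact Real.rpow_le_rpow_of_nonpos hm0 (by exact_mod_cast h) (neg_nonpos.2 hα.le)

private lemma main_aux (ρ : ℝ) (hρ0 : 0 < ρ) (α : ℝ) (hα : 1 < α)
    (u : ℕ → ℝ) (hu : ∀ n, 0 ≤ u n)
    (M : ℕ) (hM : 1 ≤ M) (B c2 : ℝ) (hB : 0 < B) (hc2 : 0 < c2)
    (P1 : ∀ i : ℕ, M ≤ i → u i ≤ B * (ρ ^ i * (i : ℝ) ^ (-α)) ∨ u i = 0)
    (P2 : ∀ i k : ℕ, M ≤ i → M ≤ k → 0 < u i * u k →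
      c2 * (ρ ^ (i + k) * ((i + k : ℕ) : ℝ) ^ (-α)) ≤ u (i + k)) :
    ∀ ε : ℝ, 0 < ε → ∃ N : ℕ, 0 < N ∧ ∀ n : ℕ, 2 * N ≤ n →
      ∑ i ∈ Finset.Icc N (n - N), u i * u (n - i) ≤ ε * u n := by
  intro ε hε
  set f : ℕ → ℝ := fun i => (i : ℝ) ^ (-α) with hf
  have hfnn : ∀ i, 0 ≤ f i := fun i => Real.rpow_nonneg (Nat.cast_nonneg i) _
  have hsum : Summable f := Real.summable_nat_rpow.2 (by linarith)
  have htail : Tendsto (fun N => ∑' k, f (k + N)) atTop (nhds 0) := tendsto_sum_nat_add f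
  have h2α : (0:ℝ) < (2:ℝ) ^ α := Real.rpow_pos_of_pos (by norm_num) _
  set K : ℝ := ε * c2 / (2 * B ^ 2 * (2:ℝ) ^ α) with hK
  have hKpos : 0 < K := by positivity
  obtain ⟨N, hNM, hTN⟩ : ∃ N : ℕ, M + 1 ≤ N ∧ (∑' k, f (k + N)) < K := by
    have h1 := (htail.eventually_lt_const hKpos).and (eventually_ge_atTop (M + 1))
    obtain ⟨N, hN⟩ := h1.exists
    exact ⟨N, hN.2, hN.1⟩
  refine ⟨N, by omega, ?_⟩
  intro n hn
  set T : ℝ := ∑' k, f (k + N) with hT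
  by_cases hpos : ∃ i ∈ Finset.Icc N (n - N), 0 < u i * u (n - i)
  · obtain ⟨i0, hi0mem, hi0⟩ := hpos
    rw [Finset.mem_Icc] at hi0mem
    have hn1 : 1 ≤ n := by omega
    have hnR : (1:ℝ) ≤ n := by exact_mod_cast hn1
    have hun : c2 * (ρ ^ n * (n : ℝ) ^ (-α)) ≤ u n := by
      have h := P2 i0 (n - i0) (by omega) (by omega) hi0
      rwa [show i0 + (n - i0) = n from by omega] at h
    -- pointwise bound on the summands
    have key : ∀ i ∈ Finset.Icc N (n - N),
        u i * u (n - i) ≤ B ^ 2 * ρ ^ n * ((2:ℝ) ^ α * (n : ℝ) ^ (-α)) * (f i + f (n - i)) := by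
      intro i hi
      rw [Finset.mem_Icc] at hi
      have hiN : N ≤ i := hi.1
      have hiB : i ≤ n - N := hi.2
      have hfi : 0 ≤ f i := hfnn i
      have hfni : 0 ≤ f (n - i) := hfnn (n - i)
      rcases P1 i (by omega) with h1 | h1
      · rcases P1 (n - i) (by omega) with h2 | h2
        · have hprod : u i * u (n - i) ≤ B ^ 2 * ρ ^ n * (f i * f (n - i)) := by
            calc u i * u (n - i)
                ≤ (B * (ρ ^ i * f i)) * (B * (ρ ^ (n - i) * f (n - i))) :=
                  mul_le_mul h1 h2 (hu _) (by positivity)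
              _ = B ^ 2 * ρ ^ (i + (n - i)) * (f i * f (n - i)) := by rw [pow_add]; ring
              _ = B ^ 2 * ρ ^ n * (f i * f (n - i)) := by
                  rw [show i + (n - i) = n from by omega]
          have hsplit : f i * f (n - i) ≤ (2:ℝ) ^ α * (n : ℝ) ^ (-α) * (f i + f (n - i)) := by
            have hiR : (1:ℝ) ≤ (i : ℝ) := by exact_mod_cast (by omega : 1 ≤ i)
            have hniR : (1:ℝ) ≤ ((n - i : ℕ) : ℝ) := by exact_mod_cast (by omega : 1 ≤ n - i)
            have hab : (i : ℝ) + ((n - i : ℕ) : ℝ) = (n : ℝ) := by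
              have : i + (n - i) = n := by omega
              exact_mod_cast congrArg (Nat.cast : ℕ → ℝ) this
            have hnhalf : ∀ b : ℕ, (n : ℝ) / 2 ≤ (b : ℝ) → 1 ≤ (b:ℝ) →
                f b ≤ (2:ℝ) ^ α * (n : ℝ) ^ (-α) := by
              intro b hb hb1
              have : (b : ℝ) ^ (-α) ≤ ((n : ℝ) / 2) ^ (-α) :=
                Real.rpow_le_rpow_of_nonpos (by linarith) hb (by linarith)
              calc f b ≤ ((n : ℝ) / 2) ^ (-α) := this
                _ = (2:ℝ) ^ α * (n : ℝ) ^ (-α) :=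
                  rpow_div_helper _ _ _ (by linarith) (by norm_num)
            have h2n : (0:ℝ) ≤ (2:ℝ) ^ α * (n : ℝ) ^ (-α) := by positivity
            rcases le_total ((i : ℝ)) (((n - i : ℕ) : ℝ)) with hle | hle
            · have hb := hnhalf (n - i) (by linarith) hniR
              calc f i * f (n - i) ≤ f i * ((2:ℝ) ^ α * (n : ℝ) ^ (-α)) :=
                    mul_le_mul_of_nonneg_left hb hfi
                _ ≤ (2:ℝ) ^ α * (n : ℝ) ^ (-α) * (f i + f (n - i)) := by nlinarith
            · have hb := hnhalf i (by linarith) hiR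
              calc f i * f (n - i) ≤ ((2:ℝ) ^ α * (n : ℝ) ^ (-α)) * f (n - i) :=
                    mul_le_mul_of_nonneg_right hb hfni
                _ ≤ (2:ℝ) ^ α * (n : ℝ) ^ (-α) * (f i + f (n - i)) := by nlinarith
          calc u i * u (n - i) ≤ B ^ 2 * ρ ^ n * (f i * f (n - i)) := hprod
            _ ≤ B ^ 2 * ρ ^ n * ((2:ℝ) ^ α * (n : ℝ) ^ (-α) * (f i + f (n - i))) :=
                mul_le_mul_of_nonneg_left hsplit (by positivity)
            _ = B ^ 2 * ρ ^ n * ((2:ℝ) ^ α * (n : ℝ) ^ (-α)) * (f i + f (n - i)) := by ring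
        · rw [h2, mul_zero]; positivity
      · rw [h1, zero_mul]; positivity
    -- reflection identity
    have hrefl : ∑ i ∈ Finset.Icc N (n - N), f (n - i) = ∑ i ∈ Finset.Icc N (n - N), f i := by
      refine Finset.sum_nbij' (fun i => n - i) (fun i => n - i) ?_ ?_ ?_ ?_ ?_
      · intro a ha; simp only [Finset.mem_Icc] at ha ⊢; omega
      · intro a ha; simp only [Finset.mem_Icc] at ha ⊢; omega
      · intro a ha; simp only [Finset.mem_Icc] at ha; omega
      · intro a ha; simp only [Finset.mem_Icc] at ha; omega
      · intro a ha; rfl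
    -- finite sum bounded by the tail of the series
    have hsumle : ∑ i ∈ Finset.Icc N (n - N), f i ≤ T := by
      have hsum' : Summable (fun k => f (k + N)) := (summable_nat_add_iff N).2 hsum
      have e1 : ∑ i ∈ Finset.Icc N (n - N), f i
          = ∑ j ∈ Finset.range (n - N + 1 - N), f (j + N) := by
        rw [← Finset.Ico_add_one_right_eq_Icc, Finset.sum_Ico_eq_sum_range]
        exact Finset.sum_congr rfl (fun j _ => by rw [Nat.add_comm])
      rw [e1, hT]
      exact Summable.sum_le_tsum _ (fun j _ => hfnn _) hsum'
    have hTnn : 0 ≤ T := by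
      calc (0:ℝ) ≤ ∑ i ∈ Finset.Icc N (n - N), f i := Finset.sum_nonneg fun i _ => hfnn i
        _ ≤ T := hsumle
    have chain : ∑ i ∈ Finset.Icc N (n - N), u i * u (n - i)
        ≤ B ^ 2 * ρ ^ n * ((2:ℝ) ^ α * (n : ℝ) ^ (-α)) * (2 * T) := by
      calc ∑ i ∈ Finset.Icc N (n - N), u i * u (n - i)
          ≤ ∑ i ∈ Finset.Icc N (n - N),
              B ^ 2 * ρ ^ n * ((2:ℝ) ^ α * (n : ℝ) ^ (-α)) * (f i + f (n - i)) :=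
            Finset.sum_le_sum key
        _ = B ^ 2 * ρ ^ n * ((2:ℝ) ^ α * (n : ℝ) ^ (-α)) *
              ∑ i ∈ Finset.Icc N (n - N), (f i + f (n - i)) := by rw [Finset.mul_sum]
        _ = B ^ 2 * ρ ^ n * ((2:ℝ) ^ α * (n : ℝ) ^ (-α)) *
              (2 * ∑ i ∈ Finset.Icc N (n - N), f i) := by
            rw [Finset.sum_add_distrib, hrefl]; ring
        _ ≤ B ^ 2 * ρ ^ n * ((2:ℝ) ^ α * (n : ℝ) ^ (-α)) * (2 * T) := by
            have h0 : (0:ℝ) ≤ B ^ 2 * ρ ^ n * ((2:ℝ) ^ α * (n : ℝ) ^ (-α)) := by positivity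
            have h2 : 2 * ∑ i ∈ Finset.Icc N (n - N), f i ≤ 2 * T := by linarith
            exact mul_le_mul_of_nonneg_left h2 h0
    have hnpos : (0:ℝ) < (n : ℝ) ^ (-α) := Real.rpow_pos_of_pos (by linarith) _
    have hρn : (0:ℝ) < ρ ^ n := pow_pos hρ0 n
    have hfinal : B ^ 2 * ρ ^ n * ((2:ℝ) ^ α * (n : ℝ) ^ (-α)) * (2 * T)
        ≤ ε * (c2 * (ρ ^ n * (n : ℝ) ^ (-α))) := by
      have hcoef : 2 * B ^ 2 * (2:ℝ) ^ α * T ≤ ε * c2 := by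
        have h1 : 2 * B ^ 2 * (2:ℝ) ^ α * T ≤ 2 * B ^ 2 * (2:ℝ) ^ α * K :=
          mul_le_mul_of_nonneg_left hTN.le (by positivity)
        have h2 : 2 * B ^ 2 * (2:ℝ) ^ α * K = ε * c2 := by
          rw [hK]; field_simp
        linarith
      have := mul_le_mul_of_nonneg_right hcoef (le_of_lt (mul_pos hρn hnpos))
      calc B ^ 2 * ρ ^ n * ((2:ℝ) ^ α * (n : ℝ) ^ (-α)) * (2 * T)
          = (2 * B ^ 2 * (2:ℝ) ^ α * T) * (ρ ^ n * (n : ℝ) ^ (-α)) := by ring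
        _ ≤ (ε * c2) * (ρ ^ n * (n : ℝ) ^ (-α)) := this
        _ = ε * (c2 * (ρ ^ n * (n : ℝ) ^ (-α))) := by ring
    calc ∑ i ∈ Finset.Icc N (n - N), u i * u (n - i)
        ≤ ε * (c2 * (ρ ^ n * (n : ℝ) ^ (-α))) := le_trans chain hfinal
      _ ≤ ε * u n := mul_le_mul_of_nonneg_left hun hε.le
  · push_neg at hpos
    have : ∑ i ∈ Finset.Icc N (n - N), u i * u (n - i) = 0 :=
      Finset.sum_eq_zero fun i hi =>
        le_antisymm (hpos i hi) (mul_nonneg (hu i) (hu (n - i)))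
    rw [this]
    exact mul_nonneg hε.le (hu n)

/-- Let `ρ ∈ (0,1]`, `α > 1`, and let `u : ℕ → [0,∞)` satisfy
`u_{2n} ≍ ρ^{2n}·n^{-α}` and the odd-term dichotomy (either all odd terms vanish or
`u_{n+1}/u_n → ρ`). Then for every `ε > 0` there is `N > 0` with
`Σ_{i=N}^{n-N} u_i·u_{n-i} ≤ ε·u_n` for all `n ≥ 2N`. -/
theorem stmt15 (ρ : ℝ) (hρ0 : 0 < ρ) (hρ1 : ρ ≤ 1) (α : ℝ) (hα : 1 < α)
    (u : ℕ → ℝ) (hu : ∀ n, 0 ≤ u n)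
    (c C : ℝ) (hc : 0 < c) (hcC : c ≤ C)
    (hlow : ∀ n : ℕ, 1 ≤ n → c * ρ ^ (2 * n) * (n : ℝ) ^ (-α) ≤ u (2 * n))
    (hup : ∀ n : ℕ, 1 ≤ n → u (2 * n) ≤ C * ρ ^ (2 * n) * (n : ℝ) ^ (-α))
    (hodd : (∀ n : ℕ, u (2 * n + 1) = 0) ∨
      Tendsto (fun n : ℕ => u (n + 1) / u n) atTop (nhds ρ)) :
    ∀ ε : ℝ, 0 < ε → ∃ N : ℕ, 0 < N ∧ ∀ n : ℕ, 2 * N ≤ n →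
      ∑ i ∈ Finset.Icc N (n - N), u i * u (n - i) ≤ ε * u n := by
  have hα0 : 0 < α := by linarith
  have hC : 0 < C := lt_of_lt_of_le hc hcC
  have h4α : (0:ℝ) < (4:ℝ) ^ α := Real.rpow_pos_of_pos (by norm_num) _
  obtain ⟨M, hM1, B, c2, hB, hc2, P1, P2⟩ :
      ∃ M : ℕ, 1 ≤ M ∧ ∃ B c2 : ℝ, 0 < B ∧ 0 < c2 ∧
        (∀ i : ℕ, M ≤ i → u i ≤ B * (ρ ^ i * (i : ℝ) ^ (-α)) ∨ u i = 0) ∧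
        (∀ i k : ℕ, M ≤ i → M ≤ k → 0 < u i * u k →
          c2 * (ρ ^ (i + k) * ((i + k : ℕ) : ℝ) ^ (-α)) ≤ u (i + k)) := by
    rcases hodd with hz | ht
    · -- all odd terms vanish
      refine ⟨2, by norm_num, C * 4 ^ α, c, by positivity, hc, ?_, ?_⟩
      · intro i hi
        rcases Nat.even_or_odd i with ⟨j, hj⟩ | ⟨j, hj⟩
        · left
          have hij : i = 2 * j := by omega
          have hj1 : 1 ≤ j := by omega
          have h1 : u i ≤ C * ρ ^ i * (j : ℝ) ^ (-α) := by rw [hij]; exact hup j hj1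
          have h2 : (j : ℝ) ^ (-α) ≤ 4 ^ α * (i : ℝ) ^ (-α) := by
            refine base_cmp α hα0 j i hj1 (by omega) ?_
            have hjR : (1:ℝ) ≤ (j : ℝ) := by exact_mod_cast hj1
            have : (i : ℝ) = 2 * j := by exact_mod_cast hij
            rw [this]; nlinarith [hjR]
          calc u i ≤ C * ρ ^ i * (j : ℝ) ^ (-α) := h1
            _ ≤ C * ρ ^ i * (4 ^ α * (i : ℝ) ^ (-α)) :=
              mul_le_mul_of_nonneg_left h2 (by positivity)
            _ = C * 4 ^ α * (ρ ^ i * (i : ℝ) ^ (-α)) := by ring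
        · right; rw [hj]; exact hz j
      · intro i k hi hk hik
        have hie : Even i := by
          rcases Nat.even_or_odd i with he | ⟨j, hj⟩
          · exact he
          · exfalso; rw [hj, hz j, zero_mul] at hik; exact lt_irrefl 0 hik
        have hke : Even k := by
          rcases Nat.even_or_odd k with he | ⟨j, hj⟩
          · exact he
          · exfalso; rw [hj, hz j, mul_zero] at hik; exact lt_irrefl 0 hik
        obtain ⟨j, hj⟩ := hie
        obtain ⟨l, hl⟩ := hke
        have hikm : i + k = 2 * (j + l) := by omega
        have hjl1 : 1 ≤ j + l := by omega
        have h1 : c * ρ ^ (i + k) * ((j + l : ℕ) : ℝ) ^ (-α) ≤ u (i + k) := by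
          rw [hikm]; exact hlow (j + l) hjl1
        have h2 : ((i + k : ℕ) : ℝ) ^ (-α) ≤ ((j + l : ℕ) : ℝ) ^ (-α) :=
          base_anti α hα0 (j + l) (i + k) hjl1 (by omega)
        calc c * (ρ ^ (i + k) * ((i + k : ℕ) : ℝ) ^ (-α))
            ≤ c * (ρ ^ (i + k) * ((j + l : ℕ) : ℝ) ^ (-α)) := by
              have hq := mul_le_mul_of_nonneg_left h2
                (by positivity : (0:ℝ) ≤ c * ρ ^ (i + k))
              linarith
          _ = c * ρ ^ (i + k) * ((j + l : ℕ) : ℝ) ^ (-α) := by ring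
          _ ≤ u (i + k) := h1
    · -- ratio tends to ρ
      have hev : ∀ᶠ n in atTop, u (n + 1) / u n ∈ Set.Ioo (ρ / 2) (2 * ρ) :=
        ht (Ioo_mem_nhds (by linarith) (by linarith))
      obtain ⟨M0, hM0⟩ := eventually_atTop.1 hev
      set M := 2 * M0 + 2 with hMdef
      -- pointwise two-sided bounds for n ≥ M
      have hupper : ∀ n : ℕ, M ≤ n → u n ≤ 2 * C * 4 ^ α * (ρ ^ n * (n : ℝ) ^ (-α)) := by
        intro n hn
        rcases Nat.even_or_odd n with ⟨m, hm⟩ | ⟨m, hm⟩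
        · have hnm : n = 2 * m := by omega
          have hm1 : 1 ≤ m := by omega
          have h1 : u n ≤ C * ρ ^ n * (m : ℝ) ^ (-α) := by rw [hnm]; exact hup m hm1
          have h2 : (m : ℝ) ^ (-α) ≤ 4 ^ α * (n : ℝ) ^ (-α) := by
            refine base_cmp α hα0 m n hm1 (by omega) ?_
            have hmR : (1:ℝ) ≤ (m : ℝ) := by exact_mod_cast hm1
            have : (n : ℝ) = 2 * m := by exact_mod_cast hnm
            rw [this]; nlinarith [hmR]
          calc u n ≤ C * ρ ^ n * (m : ℝ) ^ (-α) := h1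
            _ ≤ C * ρ ^ n * (4 ^ α * (n : ℝ) ^ (-α)) :=
              mul_le_mul_of_nonneg_left h2 (by positivity)
            _ ≤ 2 * C * 4 ^ α * (ρ ^ n * (n : ℝ) ^ (-α)) := by
              have hX : (0:ℝ) < ρ ^ n * (n : ℝ) ^ (-α) :=
                mul_pos (pow_pos hρ0 n) (Real.rpow_pos_of_pos
                  (show (0:ℝ) < n by exact_mod_cast (by omega : 0 < n)) (-α))
              nlinarith [mul_pos (mul_pos hC h4α) hX]
        · have hm1 : 1 ≤ m := by omega
          have hM0m : M0 ≤ 2 * m := by omega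
          have hu2m : 0 < u (2 * m) := by
            have := hlow m hm1
            have h1 : (0:ℝ) < c * ρ ^ (2 * m) * (m : ℝ) ^ (-α) := by positivity
            linarith
          have hratio := hM0 (2 * m) hM0m
          have hub : u (2 * m + 1) ≤ 2 * ρ * u (2 * m) := by
            have := hratio.2
            rw [div_lt_iff₀ hu2m] at this
            linarith
          have h1 : u n ≤ 2 * ρ * (C * ρ ^ (2 * m) * (m : ℝ) ^ (-α)) := by
            rw [hm]
            calc u (2 * m + 1) ≤ 2 * ρ * u (2 * m) := hub
              _ ≤ 2 * ρ * (C * ρ ^ (2 * m) * (m : ℝ) ^ (-α)) :=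
                mul_le_mul_of_nonneg_left (hup m hm1) (by positivity)
          have h2 : (m : ℝ) ^ (-α) ≤ 4 ^ α * (n : ℝ) ^ (-α) := by
            refine base_cmp α hα0 m n hm1 (by omega) ?_
            have hmR : (1:ℝ) ≤ (m : ℝ) := by exact_mod_cast hm1
            have : (n : ℝ) = 2 * m + 1 := by exact_mod_cast hm
            rw [this]; nlinarith [hmR]
          have hρpow : ρ ^ n = ρ * ρ ^ (2 * m) := by
            rw [hm, pow_succ]; ring
          calc u n ≤ 2 * ρ * (C * ρ ^ (2 * m) * (m : ℝ) ^ (-α)) := h1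
            _ ≤ 2 * ρ * (C * ρ ^ (2 * m) * (4 ^ α * (n : ℝ) ^ (-α))) := by
              have : (0:ℝ) ≤ 2 * ρ := by linarith
              refine mul_le_mul_of_nonneg_left ?_ this
              exact mul_le_mul_of_nonneg_left h2 (by positivity)
            _ = 2 * C * 4 ^ α * (ρ ^ n * (n : ℝ) ^ (-α)) := by rw [hρpow]; ring
      have hlower : ∀ n : ℕ, M ≤ n → c / 2 * (ρ ^ n * (n : ℝ) ^ (-α)) ≤ u n := by
        intro n hn
        rcases Nat.even_or_odd n with ⟨m, hm⟩ | ⟨m, hm⟩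
        · have hnm : n = 2 * m := by omega
          have hm1 : 1 ≤ m := by omega
          have h1 : c * ρ ^ n * (m : ℝ) ^ (-α) ≤ u n := by rw [hnm]; exact hlow m hm1
          have h2 : (n : ℝ) ^ (-α) ≤ (m : ℝ) ^ (-α) := base_anti α hα0 m n hm1 (by omega)
          have hq : c * ρ ^ n * (n : ℝ) ^ (-α) ≤ c * ρ ^ n * (m : ℝ) ^ (-α) :=
            mul_le_mul_of_nonneg_left h2 (by positivity)
          have hX : (0:ℝ) ≤ c * (ρ ^ n * (n : ℝ) ^ (-α)) := by positivity
          linarith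
        · have hm1 : 1 ≤ m := by omega
          have hM0m : M0 ≤ 2 * m := by omega
          have hu2m : c * ρ ^ (2 * m) * (m : ℝ) ^ (-α) ≤ u (2 * m) := hlow m hm1
          have hu2mpos : 0 < u (2 * m) := by
            have h1 : (0:ℝ) < c * ρ ^ (2 * m) * (m : ℝ) ^ (-α) := by positivity
            linarith
          have hratio := hM0 (2 * m) hM0m
          have hlb : ρ / 2 * u (2 * m) ≤ u (2 * m + 1) := by
            have := hratio.1
            rw [lt_div_iff₀ hu2mpos] at this
            linarith
          have h2 : (n : ℝ) ^ (-α) ≤ (m : ℝ) ^ (-α) := base_anti α hα0 m n hm1 (by omega)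
          have hρpow : ρ ^ n = ρ * ρ ^ (2 * m) := by
            rw [hm, pow_succ]; ring
          have hchain : c / 2 * (ρ ^ n * (n : ℝ) ^ (-α)) ≤ ρ / 2 * u (2 * m) := by
            rw [hρpow]
            have hstep : c * ρ ^ (2 * m) * (n : ℝ) ^ (-α) ≤ u (2 * m) := by
              have hq : c * ρ ^ (2 * m) * (n : ℝ) ^ (-α)
                  ≤ c * ρ ^ (2 * m) * (m : ℝ) ^ (-α) := by
                have : (0:ℝ) ≤ c * ρ ^ (2 * m) := by positivity
                exact mul_le_mul_of_nonneg_left h2 this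
              linarith
            have := mul_le_mul_of_nonneg_left hstep (by positivity : (0:ℝ) ≤ ρ / 2)
            linarith
          calc c / 2 * (ρ ^ n * (n : ℝ) ^ (-α)) ≤ ρ / 2 * u (2 * m) := hchain
            _ ≤ u (2 * m + 1) := hlb
            _ = u n := by rw [hm]
      refine ⟨M, by omega, 2 * C * 4 ^ α, c / 2, by positivity, by positivity, ?_, ?_⟩
      · intro i hi; exact Or.inl (hupper i hi)
      · intro i k hi hk _
        exact hlower (i + k) (by omega)
  exact main_aux ρ hρ0 α hα u hu M hM1 B c2 hB hc2 P1 P2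
end

section
/- Let ρ ∈ (0,1], α ∈ ℝ, c > 0, β ∈ (0,1), and let u : ℕ → [0,∞) be a sequence such that there are constants 0 < c' ≤ C' with c'·ρ^{2n}·n^{−α}·e^{−c·n^β} ≤ u_{2n} ≤ C'·ρ^{2n}·n^{−α}·e^{−c·n^β} for all n ≥ 1, and such that either u_{2n+1} = 0 for all n ≥ 0, or lim_{n→∞} u_{n+1}/u_n = ρ. Then for every ε > 0 there exists N > 0 such that for all n ≥ 2N: Σ_{i=N}^{n−N} u_i·u_{n−i} ≤ ε·u_n. -/
open Filter

/-- auxiliary sequence `m ↦ m^(-α) * exp (-d * m^β)` -/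
noncomputable def aux16 (α d β : ℝ) (m : ℕ) : ℝ :=
  (m : ℝ) ^ (-α) * Real.exp (-d * (m : ℝ) ^ β)

lemma aux16_nonneg (α d β : ℝ) (m : ℕ) : 0 ≤ aux16 α d β m :=
  mul_nonneg (Real.rpow_nonneg (Nat.cast_nonneg m) _) (Real.exp_nonneg _)

lemma aux16_pos (α d β : ℝ) (m : ℕ) (hm : 1 ≤ m) : 0 < aux16 α d β m := by
  have h : (0:ℝ) < m := by exact_mod_cast hm
  exact mul_pos (Real.rpow_pos_of_pos h _) (Real.exp_pos _)

lemma aux16_qpow2 {α q t : ℝ} (h1 : 1/2 ≤ q) (h2 : q ≤ 2) (ht : |t| ≤ |α|) :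
    q ^ t ≤ (2:ℝ) ^ |α| := by
  have hq : 0 < q := by linarith
  rcases le_total 1 q with h | h
  · exact (Real.rpow_le_rpow_of_exponent_le h ((le_abs_self t).trans ht)).trans
      (Real.rpow_le_rpow (by linarith) h2 (abs_nonneg α))
  · have e1 : q ^ t ≤ q ^ (-|t|) :=
      Real.rpow_le_rpow_of_exponent_ge hq h (neg_abs_le t)
    have e2 : q ^ (-|t|) = (q⁻¹) ^ |t| := by
      rw [Real.rpow_neg hq.le, ← Real.inv_rpow hq.le]
    have e3 : q⁻¹ ≤ 2 := by
      rw [inv_eq_one_div, div_le_iff₀ hq]; linarith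
    have e4 : (q⁻¹) ^ |t| ≤ (2:ℝ) ^ |t| :=
      Real.rpow_le_rpow (by positivity) e3 (abs_nonneg t)
    have e5 : (2:ℝ) ^ |t| ≤ (2:ℝ) ^ |α| :=
      Real.rpow_le_rpow_of_exponent_le one_le_two ht
    calc q ^ t ≤ q ^ (-|t|) := e1
      _ = (q⁻¹) ^ |t| := e2
      _ ≤ (2:ℝ) ^ |t| := e4
      _ ≤ (2:ℝ) ^ |α| := e5

lemma aux16_ratio {α w z t : ℝ} (hw : 0 < w) (hz : 0 < z) (h1 : z ≤ 2*w) (h2 : w ≤ 2*z)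
    (ht : |t| ≤ |α|) : z ^ t ≤ (2:ℝ) ^ |α| * w ^ t := by
  have hq1 : 1/2 ≤ z/w := by rw [le_div_iff₀ hw]; linarith
  have hq2 : z/w ≤ 2 := by rw [div_le_iff₀ hw]; linarith
  have h3 := aux16_qpow2 hq1 hq2 ht
  rw [Real.div_rpow hz.le hw.le, div_le_iff₀ (Real.rpow_pos_of_pos hw t)] at h3
  exact h3

lemma aux16_concave {β x y : ℝ} (hβ0 : 0 < β) (hβ1 : β ≤ 1) (hx : 0 < x) (hxy : x ≤ y) :
    (x + y) ^ β + (1 - β) * x ^ β ≤ x ^ β + y ^ β := by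
  have hy : 0 < y := hx.trans_le hxy
  have hq0 : (0:ℝ) ≤ x / y := by positivity
  have hb : (1 + x/y) ^ β ≤ 1 + β * (x/y) :=
    rpow_one_add_le_one_add_mul_self (by linarith) hβ0.le hβ1
  have hxyy : x + y = y * (1 + x/y) := by field_simp; ring
  have h1 : (x+y)^β ≤ y^β * (1 + β*(x/y)) := by
    rw [hxyy, Real.mul_rpow hy.le (by linarith)]
    exact mul_le_mul_of_nonneg_left hb (Real.rpow_nonneg hy.le β)
  have h3 : y ^ β / y = y ^ (β - 1) := by
    rw [Real.rpow_sub hy, Real.rpow_one]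
  have h2 : y ^ β * (1 + β * (x / y)) = y ^ β + β * (x * y ^ (β - 1)) := by
    rw [← h3]; field_simp
  have h4 : y ^ (β-1) ≤ x ^ (β-1) := Real.rpow_le_rpow_of_nonpos hx hxy (by linarith)
  have h5 : x * x ^ (β-1) = x ^ β := by
    have e := Real.rpow_add hx 1 (β-1)
    rw [Real.rpow_one] at e
    have e2 : (1:ℝ) + (β-1) = β := by ring
    rw [e2] at e
    rw [← e]
  have h6 : x * y ^ (β-1) ≤ x ^ β := by
    rw [← h5]; exact mul_le_mul_of_nonneg_left h4 hx.le
  have h7 : β * (x * y^(β-1)) ≤ β * x ^ β := mul_le_mul_of_nonneg_left h6 hβ0.le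
  rw [h2] at h1
  linarith

lemma aux16_core_aux (α β γ : ℝ) (hβ0 : 0 < β) (hβ1 : β ≤ 1) (hγ : 0 < γ)
    (i j : ℕ) (hi : 1 ≤ i) (hij : i ≤ j) :
    aux16 α γ β i * aux16 α γ β j ≤
      (2:ℝ) ^ |α| * (aux16 α (γ*(1-β)) β i * aux16 α γ β (i+j)) := by
  have hx : (0:ℝ) < i := by exact_mod_cast hi
  have hxy : (i:ℝ) ≤ (j:ℝ) := by exact_mod_cast hij
  have hy : (0:ℝ) < j := lt_of_lt_of_le hx hxy
  simp only [aux16]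
  push_cast
  have ha : ((j:ℝ)) ^ (-α) ≤ (2:ℝ) ^ |α| * ((i:ℝ)+(j:ℝ)) ^ (-α) := by
    apply aux16_ratio (by linarith) hy (by linarith) (by linarith)
    exact le_of_eq (abs_neg α)
  have hb : Real.exp (-γ * (i:ℝ)^β) * Real.exp (-γ * (j:ℝ)^β) ≤
      Real.exp (-(γ*(1-β)) * (i:ℝ)^β) * Real.exp (-γ * ((i:ℝ)+(j:ℝ))^β) := by
    rw [← Real.exp_add, ← Real.exp_add, Real.exp_le_exp]
    have hc := aux16_concave hβ0 hβ1 hx hxy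
    nlinarith [mul_le_mul_of_nonneg_left hc hγ.le]
  calc ((i:ℝ)^(-α) * Real.exp (-γ * (i:ℝ)^β)) * ((j:ℝ)^(-α) * Real.exp (-γ * (j:ℝ)^β))
      = ((i:ℝ)^(-α) * (j:ℝ)^(-α)) * (Real.exp (-γ * (i:ℝ)^β) * Real.exp (-γ * (j:ℝ)^β)) := by
        ring
    _ ≤ ((i:ℝ)^(-α) * ((2:ℝ)^|α| * ((i:ℝ)+(j:ℝ))^(-α))) *
        (Real.exp (-(γ*(1-β)) * (i:ℝ)^β) * Real.exp (-γ * ((i:ℝ)+(j:ℝ))^β)) := by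
        apply mul_le_mul (mul_le_mul_of_nonneg_left ha (Real.rpow_nonneg hx.le _)) hb
          (by positivity) (by positivity)
    _ = (2:ℝ)^|α| * (((i:ℝ)^(-α) * Real.exp (-(γ*(1-β)) * (i:ℝ)^β)) *
          (((i:ℝ)+(j:ℝ))^(-α) * Real.exp (-γ * ((i:ℝ)+(j:ℝ))^β))) := by
        ring

lemma aux16_core (α β γ : ℝ) (hβ0 : 0 < β) (hβ1 : β ≤ 1) (hγ : 0 < γ)
    (i j : ℕ) (hi : 1 ≤ i) (hj : 1 ≤ j) :
    aux16 α γ β i * aux16 α γ β j ≤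
      (2:ℝ) ^ |α| * (aux16 α (γ*(1-β)) β (min i j) * aux16 α γ β (i+j)) := by
  rcases le_total i j with h | h
  · rw [min_eq_left h]
    exact aux16_core_aux α β γ hβ0 hβ1 hγ i j hi h
  · rw [min_eq_right h, mul_comm (aux16 α γ β i), Nat.add_comm i j]
    exact aux16_core_aux α β γ hβ0 hβ1 hγ j i hj h

lemma aux16_step (ρ α γ β : ℝ) (hρ0 : 0 < ρ) (hρ1 : ρ ≤ 1) (hβ0 : 0 < β) (hβ1 : β ≤ 1)
    (hγ : 0 < γ) (m : ℕ) (hm : 1 ≤ m) :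
    ρ ^ (m+1) * aux16 α γ β (m+1) ≤ ((2:ℝ)^|α| * Real.exp γ / ρ) * (ρ ^ m * aux16 α γ β m) ∧
      ρ ^ m * aux16 α γ β m ≤ ((2:ℝ)^|α| * Real.exp γ / ρ) * (ρ ^ (m+1) * aux16 α γ β (m+1)) := by
  have hx1 : (1:ℝ) ≤ (m:ℝ) := by exact_mod_cast hm
  have hx0 : (0:ℝ) < (m:ℝ) := by linarith
  have habs : |(-α)| ≤ |α| := le_of_eq (abs_neg α)
  have hPup : ((m:ℝ)+1) ^ (-α) ≤ (2:ℝ)^|α| * (m:ℝ)^(-α) :=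
    aux16_ratio hx0 (by linarith) (by linarith) (by linarith) habs
  have hPdn : (m:ℝ) ^ (-α) ≤ (2:ℝ)^|α| * ((m:ℝ)+1)^(-α) :=
    aux16_ratio (by linarith) hx0 (by linarith) (by linarith) habs
  have hrm : (m:ℝ)^β ≤ ((m:ℝ)+1)^β := Real.rpow_le_rpow hx0.le (by linarith) hβ0.le
  have hsub : ((m:ℝ)+1)^β ≤ (m:ℝ)^β + 1 := by
    have h := aux16_concave hβ0 hβ1 one_pos hx1
    rw [Real.one_rpow] at h
    have e : (1:ℝ) + (m:ℝ) = (m:ℝ) + 1 := by ring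
    rw [e] at h
    linarith
  have hEup : Real.exp (-γ * ((m:ℝ)+1)^β) ≤ Real.exp (-γ * (m:ℝ)^β) := by
    rw [Real.exp_le_exp]
    nlinarith [mul_le_mul_of_nonneg_left hrm hγ.le]
  have hEdn : Real.exp (-γ * (m:ℝ)^β) ≤ Real.exp γ * Real.exp (-γ * ((m:ℝ)+1)^β) := by
    rw [← Real.exp_add, Real.exp_le_exp]
    nlinarith [mul_le_mul_of_nonneg_left hsub hγ.le]
  have h2a : (0:ℝ) ≤ (2:ℝ)^|α| := Real.rpow_nonneg (by norm_num) _
  have hK2 : (2:ℝ)^|α| ≤ (2:ℝ)^|α| * Real.exp γ / ρ := by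
    have h1 : (1:ℝ) ≤ Real.exp γ / ρ := by
      rw [le_div_iff₀ hρ0]
      nlinarith [Real.one_le_exp hγ.le]
    calc (2:ℝ)^|α| = (2:ℝ)^|α| * 1 := (mul_one _).symm
      _ ≤ (2:ℝ)^|α| * (Real.exp γ / ρ) := mul_le_mul_of_nonneg_left h1 h2a
      _ = (2:ℝ)^|α| * Real.exp γ / ρ := by ring
  constructor
  · simp only [aux16]
    push_cast
    calc ρ^(m+1) * (((m:ℝ)+1)^(-α) * Real.exp (-γ * ((m:ℝ)+1)^β))
        ≤ ρ^(m+1) * (((2:ℝ)^|α| * (m:ℝ)^(-α)) * Real.exp (-γ * (m:ℝ)^β)) := by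
          apply mul_le_mul_of_nonneg_left ?_ (pow_nonneg hρ0.le _)
          exact mul_le_mul hPup hEup (Real.exp_nonneg _) (by positivity)
      _ = (2:ℝ)^|α| * (ρ * (ρ^m * ((m:ℝ)^(-α) * Real.exp (-γ*(m:ℝ)^β)))) := by ring
      _ ≤ (2:ℝ)^|α| * (1 * (ρ^m * ((m:ℝ)^(-α) * Real.exp (-γ*(m:ℝ)^β)))) := by
          apply mul_le_mul_of_nonneg_left ?_ h2a
          apply mul_le_mul_of_nonneg_right hρ1
          exact mul_nonneg (pow_nonneg hρ0.le _) (by positivity)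
      _ = (2:ℝ)^|α| * (ρ^m * ((m:ℝ)^(-α) * Real.exp (-γ*(m:ℝ)^β))) := by ring
      _ ≤ ((2:ℝ)^|α| * Real.exp γ / ρ) * (ρ^m * ((m:ℝ)^(-α) * Real.exp (-γ*(m:ℝ)^β))) := by
          apply mul_le_mul_of_nonneg_right hK2
          exact mul_nonneg (pow_nonneg hρ0.le _) (by positivity)
  · simp only [aux16]
    push_cast
    calc ρ^m * ((m:ℝ)^(-α) * Real.exp (-γ*(m:ℝ)^β))
        ≤ ρ^m * (((2:ℝ)^|α| * ((m:ℝ)+1)^(-α)) *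
            (Real.exp γ * Real.exp (-γ*((m:ℝ)+1)^β))) := by
          apply mul_le_mul_of_nonneg_left ?_ (pow_nonneg hρ0.le _)
          exact mul_le_mul hPdn hEdn (Real.exp_nonneg _) (by positivity)
      _ = ((2:ℝ)^|α| * Real.exp γ / ρ) *
            (ρ^(m+1) * (((m:ℝ)+1)^(-α) * Real.exp (-γ*((m:ℝ)+1)^β))) := by
          field_simp
          ring

lemma aux16_tendsto (s d β : ℝ) (hd : 0 < d) (hβ : 0 < β) :
    Tendsto (fun m : ℕ => (m:ℝ) ^ s * Real.exp (-d * (m:ℝ) ^ β)) atTop (nhds 0) := by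
  have h1 : Tendsto (fun x : ℝ => x ^ (s/β) * Real.exp (-d * x)) atTop (nhds 0) :=
    tendsto_rpow_mul_exp_neg_mul_atTop_nhds_zero (s/β) d hd
  have h2 : Tendsto (fun m : ℕ => (m:ℝ) ^ β) atTop atTop :=
    (tendsto_rpow_atTop hβ).comp tendsto_natCast_atTop_atTop
  have h3 := h1.comp h2
  refine Tendsto.congr (fun m => ?_) h3
  simp only [Function.comp_apply]
  congr 1
  rw [← Real.rpow_mul (Nat.cast_nonneg m)]
  congr 1
  field_simp

lemma aux16_summable (α d β : ℝ) (hd : 0 < d) (hβ : 0 < β) :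
    Summable (fun m : ℕ => aux16 α d β m) := by
  have h := aux16_tendsto (-α+2) d β hd hβ
  have hev : ∀ᶠ m : ℕ in atTop, aux16 α d β m ≤ (m:ℝ) ^ (-(2:ℝ)) := by
    filter_upwards [h.eventually_lt_const (show (0:ℝ) < 1 by norm_num),
      eventually_ge_atTop 1] with m h1 hm
    have hm0 : (0:ℝ) < m := by exact_mod_cast hm
    simp only [aux16]
    have e1 : (m:ℝ)^(-α+2) = (m:ℝ)^(-α) * (m:ℝ)^(2:ℝ) := Real.rpow_add hm0 _ _
    rw [e1] at h1
    have h2pos : (0:ℝ) < (m:ℝ)^(2:ℝ) := Real.rpow_pos_of_pos hm0 _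
    have h4 : (m:ℝ)^(-(2:ℝ)) = 1 / (m:ℝ)^(2:ℝ) := by
      rw [Real.rpow_neg hm0.le, one_div]
    rw [h4, le_div_iff₀ h2pos]
    calc (m:ℝ)^(-α) * Real.exp (-d*(m:ℝ)^β) * (m:ℝ)^(2:ℝ)
        = (m:ℝ)^(-α) * (m:ℝ)^(2:ℝ) * Real.exp (-d*(m:ℝ)^β) := by ring
      _ ≤ 1 := h1.le
  rw [eventually_atTop] at hev
  obtain ⟨m₀, hm₀⟩ := hev
  rw [← summable_nat_add_iff m₀]
  apply Summable.of_nonneg_of_le (fun n => aux16_nonneg α d β _)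
    (fun n => hm₀ (n + m₀) (Nat.le_add_left _ _))
  exact (summable_nat_add_iff m₀).mpr (Real.summable_nat_rpow.mpr (by norm_num))

/-- Let `ρ ∈ (0,1]`, `α ∈ ℝ`, `c > 0`, `β ∈ (0,1)`, and let
`u : ℕ → [0,∞)` satisfy `u_{2n} ≍ ρ^{2n}·n^{-α}·e^{-c·n^β}` and the odd-term dichotomy
(either all odd terms vanish or `u_{n+1}/u_n → ρ`). Then for every `ε > 0` there is `N > 0`
with `Σ_{i=N}^{n-N} u_i·u_{n-i} ≤ ε·u_n` for all `n ≥ 2N`. -/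
theorem stmt16 (ρ : ℝ) (hρ0 : 0 < ρ) (hρ1 : ρ ≤ 1) (α : ℝ) (c : ℝ) (hc : 0 < c)
    (β : ℝ) (hβ0 : 0 < β) (hβ1 : β < 1)
    (u : ℕ → ℝ) (hu : ∀ n, 0 ≤ u n)
    (c' C' : ℝ) (hc' : 0 < c') (hcC' : c' ≤ C')
    (hlow : ∀ n : ℕ, 1 ≤ n →
      c' * ρ ^ (2 * n) * (n : ℝ) ^ (-α) * Real.exp (-c * (n : ℝ) ^ β) ≤ u (2 * n))
    (hup : ∀ n : ℕ, 1 ≤ n →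
      u (2 * n) ≤ C' * ρ ^ (2 * n) * (n : ℝ) ^ (-α) * Real.exp (-c * (n : ℝ) ^ β))
    (hodd : (∀ n : ℕ, u (2 * n + 1) = 0) ∨
      Tendsto (fun n : ℕ => u (n + 1) / u n) atTop (nhds ρ)) :
    ∀ ε : ℝ, 0 < ε → ∃ N : ℕ, 0 < N ∧ ∀ n : ℕ, 2 * N ≤ n →
      ∑ i ∈ Finset.Icc N (n - N), u i * u (n - i) ≤ ε * u n := by
  intro ε hε
  have hC'0 : 0 < C' := lt_of_lt_of_le hc' hcC'
  have h2β : (0:ℝ) < (2:ℝ) ^ β := Real.rpow_pos_of_pos two_pos β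
  have h2α : (0:ℝ) < (2:ℝ) ^ α := Real.rpow_pos_of_pos two_pos α
  set γ := c / (2:ℝ) ^ β with hγdef
  have hγ : 0 < γ := div_pos hc h2β
  set D := (2:ℝ) ^ |α| with hD
  have hD1 : (1:ℝ) ≤ D := by
    calc (1:ℝ) = (2:ℝ) ^ (0:ℝ) := (Real.rpow_zero 2).symm
      _ ≤ D := Real.rpow_le_rpow_of_exponent_le one_le_two (abs_nonneg α)
  have hD0 : (0:ℝ) < D := lt_of_lt_of_le one_pos hD1
  set K : ℝ := (2:ℝ)^|α| * Real.exp γ / ρ with hK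
  have hK0 : 0 < K := by
    rw [hK]
    exact div_pos (mul_pos (Real.rpow_pos_of_pos two_pos _) (Real.exp_pos _)) hρ0
  -- key reformulation of the two-sided bound on even terms
  have hkey : ∀ k : ℕ, 1 ≤ k →
      (2:ℝ)^α * (ρ^(2*k) * aux16 α γ β (2*k)) =
        ρ^(2*k) * ((k:ℝ)^(-α) * Real.exp (-c * (k:ℝ)^β)) := by
    intro k hk
    have hk0 : (0:ℝ) < k := by exact_mod_cast hk
    have hmul : γ * (2:ℝ)^β = c := by
      rw [hγdef]; field_simp
    simp only [aux16]
    push_cast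
    rw [Real.mul_rpow (by norm_num : (0:ℝ) ≤ 2) hk0.le]
    rw [Real.mul_rpow (by norm_num : (0:ℝ) ≤ 2) hk0.le]
    have hexp : -γ * ((2:ℝ)^β * (k:ℝ)^β) = -c * (k:ℝ)^β := by
      linear_combination (-(k:ℝ)^β) * hmul
    rw [hexp]
    have h3 : (2:ℝ)^α * (2:ℝ)^(-α) = 1 := by
      rw [← Real.rpow_add two_pos, add_neg_cancel, Real.rpow_zero]
    linear_combination (ρ^(2*k) * ((k:ℝ)^(-α) * Real.exp (-c * (k:ℝ)^β))) * h3
  have heup : ∀ k : ℕ, 1 ≤ k →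
      u (2*k) ≤ (C' * (2:ℝ)^α) * (ρ^(2*k) * aux16 α γ β (2*k)) := by
    intro k hk
    calc u (2*k) ≤ C' * ρ^(2*k) * (k:ℝ)^(-α) * Real.exp (-c*(k:ℝ)^β) := hup k hk
      _ = (C' * (2:ℝ)^α) * (ρ^(2*k) * aux16 α γ β (2*k)) := by
          linear_combination (-C') * hkey k hk
  have helo : ∀ k : ℕ, 1 ≤ k →
      (c' * (2:ℝ)^α) * (ρ^(2*k) * aux16 α γ β (2*k)) ≤ u (2*k) := by
    intro k hk
    calc (c' * (2:ℝ)^α) * (ρ^(2*k) * aux16 α γ β (2*k))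
        = c' * ρ^(2*k) * (k:ℝ)^(-α) * Real.exp (-c*(k:ℝ)^β) := by
          linear_combination c' * hkey k hk
      _ ≤ u (2*k) := hlow k hk
  have hφnn : ∀ m : ℕ, 0 ≤ ρ^m * aux16 α γ β m :=
    fun m => mul_nonneg (pow_nonneg hρ0.le m) (aux16_nonneg _ _ _ m)
  -- uniform two-sided bounds
  obtain ⟨A, hA0, a, ha0, M, hM1, hub, hlo⟩ :
      ∃ A, 0 < A ∧ ∃ a, 0 < a ∧ ∃ M : ℕ, 1 ≤ M ∧
        (∀ m, M ≤ m → u m ≤ A * (ρ^m * aux16 α γ β m)) ∧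
        (∀ n, 2*M ≤ n → a * (ρ^n * aux16 α γ β n) ≤ u n ∨
            (¬ Even n ∧ ∀ k, u (2*k+1) = 0)) := by
    rcases hodd with hz | hrat
    · refine ⟨C' * (2:ℝ)^α, mul_pos hC'0 h2α, c' * (2:ℝ)^α, mul_pos hc' h2α, 1,
        le_refl 1, ?_, ?_⟩
      · intro m hm
        rcases Nat.even_or_odd m with ⟨k, hk⟩ | ⟨k, hk⟩
        · have hm2 : m = 2*k := by omega
          rw [hm2]
          exact heup k (by omega)
        · rw [hk, hz k]
          exact mul_nonneg (mul_pos hC'0 h2α).le (hφnn _)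
      · intro n hn
        rcases Nat.even_or_odd n with ⟨k, hk⟩ | ⟨k, hk⟩
        · left
          have hn2 : n = 2*k := by omega
          rw [hn2]
          exact helo k (by omega)
        · right
          refine ⟨?_, hz⟩
          rintro ⟨t, ht⟩
          omega
    · have h1 : ∀ᶠ m in atTop, u (m+1) / u m ∈ Set.Ioo (ρ/2) (2*ρ) :=
        hrat (Ioo_mem_nhds (by linarith) (by linarith))
      rw [eventually_atTop] at h1
      obtain ⟨M0, hM0⟩ := h1
      have hpos : ∀ m, M0 ≤ m → 0 < u m ∧ u (m+1) < 2*ρ*u m ∧ ρ/2 * u m < u (m+1) := by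
        intro m hm
        obtain ⟨hl, hr⟩ := hM0 m hm
        have hum : 0 < u m := by
          rcases (hu m).lt_or_eq with h | h
          · exact h
          · exfalso
            rw [← h, div_zero] at hl
            linarith
        exact ⟨hum, by rwa [div_lt_iff₀ hum] at hr, by rwa [lt_div_iff₀ hum] at hl⟩
      refine ⟨max (C' * (2:ℝ)^α) (2*ρ*(C' * (2:ℝ)^α)*K),
        lt_of_lt_of_le (mul_pos hC'0 h2α) (le_max_left _ _),
        min (c' * (2:ℝ)^α) (ρ/2*(c' * (2:ℝ)^α)/K),
        lt_min (mul_pos hc' h2α) (div_pos (mul_pos (half_pos hρ0) (mul_pos hc' h2α)) hK0),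
        M0 + 2, by omega, ?_, ?_⟩
      · intro m hm
        rcases Nat.even_or_odd m with ⟨k, hk⟩ | ⟨k, hk⟩
        · have hm2 : m = 2*k := by omega
          rw [hm2]
          calc u (2*k) ≤ (C' * (2:ℝ)^α) * (ρ^(2*k) * aux16 α γ β (2*k)) :=
                heup k (by omega)
            _ ≤ max (C' * (2:ℝ)^α) (2*ρ*(C' * (2:ℝ)^α)*K) * (ρ^(2*k) * aux16 α γ β (2*k)) :=
                mul_le_mul_of_nonneg_right (le_max_left _ _) (hφnn _)
        · subst hk
          obtain ⟨hu2k, hlt, _⟩ := hpos (2*k) (by omega)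
          have hst := (aux16_step ρ α γ β hρ0 hρ1 hβ0 hβ1.le hγ (2*k) (by omega)).2
          rw [← hK] at hst
          have h2 : u (2*k) ≤ (C'*(2:ℝ)^α) * (ρ^(2*k)*aux16 α γ β (2*k)) := heup k (by omega)
          have h3 := mul_le_mul_of_nonneg_left hst
            (mul_pos (mul_pos two_pos hρ0) (mul_pos hC'0 h2α)).le
          have h4 : 2*ρ*(C'*(2:ℝ)^α)*K ≤ max (C' * (2:ℝ)^α) (2*ρ*(C' * (2:ℝ)^α)*K) :=
            le_max_right _ _
          have h5 := mul_le_mul_of_nonneg_right h4 (hφnn (2*k+1))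
          have h6 := mul_le_mul_of_nonneg_left h2 (mul_pos two_pos hρ0).le
          linarith
      · intro n hn
        left
        rcases Nat.even_or_odd n with ⟨k, hk⟩ | ⟨k, hk⟩
        · have hn2 : n = 2*k := by omega
          rw [hn2]
          have h2 := helo k (by omega)
          have h3 := mul_le_mul_of_nonneg_right
            (min_le_left (c' * (2:ℝ)^α) (ρ/2*(c' * (2:ℝ)^α)/K)) (hφnn (2*k))
          linarith
        · subst hk
          obtain ⟨hu2k, _, hgt⟩ := hpos (2*k) (by omega)
          have hst := (aux16_step ρ α γ β hρ0 hρ1 hβ0 hβ1.le hγ (2*k) (by omega)).1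
          rw [← hK] at hst
          have h2 := helo k (by omega)
          have h4 := mul_le_mul_of_nonneg_right
            (min_le_right (c' * (2:ℝ)^α) (ρ/2*(c' * (2:ℝ)^α)/K)) (hφnn (2*k+1))
          have h5 := mul_le_mul_of_nonneg_left hst
            (div_pos (mul_pos (half_pos hρ0) (mul_pos hc' h2α)) hK0).le
          have h6 : ρ/2*(c'*(2:ℝ)^α)/K*(K*(ρ^(2*k)*aux16 α γ β (2*k))) =
              ρ/2*((c'*(2:ℝ)^α)*(ρ^(2*k)*aux16 α γ β (2*k))) := by
            field_simp
          have h7 := mul_le_mul_of_nonneg_left h2 (half_pos hρ0).le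
          linarith [h6.le, h6.ge]
  -- summability of the comparison sequence and choice of N
  have hd0 : 0 < γ * (1-β) := mul_pos hγ (by linarith)
  have hθsum : Summable (fun m : ℕ => aux16 α (γ*(1-β)) β m) :=
    aux16_summable α _ β hd0 hβ0
  have hθnn : ∀ m : ℕ, 0 ≤ aux16 α (γ*(1-β)) β m := fun m => aux16_nonneg _ _ _ m
  have hB0 : 0 < ε * a / (2 * D * A^2) := by
    apply div_pos (mul_pos hε ha0)
    have : (0:ℝ) < A^2 := pow_pos hA0 2
    nlinarith
  have htail : Tendsto (fun N : ℕ => ∑' k : ℕ, aux16 α (γ*(1-β)) β (k + N)) atTop (nhds 0) :=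
    tendsto_sum_nat_add _
  obtain ⟨N, hNtail, hNM⟩ :=
    ((htail.eventually_lt_const hB0).and (eventually_ge_atTop (max M 1))).exists
  have hNM' : M ≤ N := le_trans (le_max_left _ _) hNM
  have hN1 : 1 ≤ N := le_trans (le_max_right _ _) hNM
  refine ⟨N, hN1, ?_⟩
  intro n hn
  rcases hlo n (by omega) with hlon | ⟨hnodd, hz⟩
  · -- main estimate
    have hterm : ∀ i ∈ Finset.Icc N (n - N), u i * u (n - i) ≤
        (A^2 * D * (ρ^n * aux16 α γ β n)) *
          (aux16 α (γ*(1-β)) β i + aux16 α (γ*(1-β)) β (n-i)) := by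
      intro i hi
      rw [Finset.mem_Icc] at hi
      obtain ⟨hi1, hi2⟩ := hi
      have hik : i + (n - i) = n := by omega
      have hiM : M ≤ i := le_trans hNM' hi1
      have hniN : N ≤ n - i := by omega
      have hniM : M ≤ n - i := le_trans hNM' hniN
      have hi1' : 1 ≤ i := le_trans hN1 hi1
      have hni1 : 1 ≤ n - i := le_trans hN1 hniN
      have h1 : u i * u (n-i) ≤
          (A * (ρ^i * aux16 α γ β i)) * (A * (ρ^(n-i) * aux16 α γ β (n-i))) :=
        mul_le_mul (hub i hiM) (hub (n-i) hniM) (hu _)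
          (mul_nonneg hA0.le (hφnn i))
      have h2 : aux16 α γ β i * aux16 α γ β (n-i) ≤
          D * (aux16 α (γ*(1-β)) β (min i (n-i)) * aux16 α γ β (i + (n-i))) := by
        rw [hD]
        exact aux16_core α β γ hβ0 hβ1.le hγ i (n-i) hi1' hni1
      rw [hik] at h2
      have h3 : aux16 α (γ*(1-β)) β (min i (n-i)) ≤
          aux16 α (γ*(1-β)) β i + aux16 α (γ*(1-β)) β (n-i) := by
        rcases le_total i (n-i) with h | h
        · rw [min_eq_left h]; linarith [hθnn (n-i)]
        · rw [min_eq_right h]; linarith [hθnn i]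
      have h4 : ρ^i * ρ^(n-i) = ρ^n := by rw [← pow_add, hik]
      have hA2ρ : (0:ℝ) ≤ A^2 * ρ^n := mul_nonneg (sq_nonneg A) (pow_nonneg hρ0.le n)
      calc u i * u (n-i)
          ≤ (A * (ρ^i * aux16 α γ β i)) * (A * (ρ^(n-i) * aux16 α γ β (n-i))) := h1
        _ = A^2 * (ρ^i * ρ^(n-i)) * (aux16 α γ β i * aux16 α γ β (n-i)) := by ring
        _ = A^2 * ρ^n * (aux16 α γ β i * aux16 α γ β (n-i)) := by rw [h4]
        _ ≤ A^2 * ρ^n * (D * (aux16 α (γ*(1-β)) β (min i (n-i)) * aux16 α γ β n)) :=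
            mul_le_mul_of_nonneg_left h2 hA2ρ
        _ ≤ A^2 * ρ^n * (D * ((aux16 α (γ*(1-β)) β i + aux16 α (γ*(1-β)) β (n-i)) *
              aux16 α γ β n)) := by
            apply mul_le_mul_of_nonneg_left ?_ hA2ρ
            apply mul_le_mul_of_nonneg_left ?_ hD0.le
            exact mul_le_mul_of_nonneg_right h3 (aux16_nonneg _ _ _ _)
        _ = (A^2 * D * (ρ^n * aux16 α γ β n)) *
              (aux16 α (γ*(1-β)) β i + aux16 α (γ*(1-β)) β (n-i)) := by ring
    have hsum1 : ∑ i ∈ Finset.Icc N (n-N), u i * u (n-i) ≤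
        (A^2 * D * (ρ^n * aux16 α γ β n)) *
          ((∑ i ∈ Finset.Icc N (n-N), aux16 α (γ*(1-β)) β i) +
            ∑ i ∈ Finset.Icc N (n-N), aux16 α (γ*(1-β)) β (n-i)) := by
      rw [mul_add, Finset.mul_sum, Finset.mul_sum, ← Finset.sum_add_distrib]
      apply Finset.sum_le_sum
      intro i hi
      have := hterm i hi
      linarith
    have hrefl : ∑ i ∈ Finset.Icc N (n-N), aux16 α (γ*(1-β)) β (n-i) =
        ∑ i ∈ Finset.Icc N (n-N), aux16 α (γ*(1-β)) β i := by
      refine Finset.sum_nbij' (fun i => n - i) (fun i => n - i) ?_ ?_ ?_ ?_ ?_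
      · intro x hx; simp only [Finset.mem_Icc] at *; omega
      · intro x hx; simp only [Finset.mem_Icc] at *; omega
      · intro x hx; simp only [Finset.mem_Icc] at hx; show n - (n - x) = x; omega
      · intro x hx; simp only [Finset.mem_Icc] at hx; show n - (n - x) = x; omega
      · intro x hx; rfl
    rw [hrefl] at hsum1
    have hsub : ∑ i ∈ Finset.Icc N (n-N), aux16 α (γ*(1-β)) β i ≤
        ∑' k : ℕ, aux16 α (γ*(1-β)) β (k + N) := by
      rw [← Finset.Ico_add_one_right_eq_Icc, Finset.sum_Ico_eq_sum_range]
      rw [Finset.sum_congr rfl (fun k _ => by rw [Nat.add_comm N k])]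
      exact Summable.sum_le_tsum _ (fun k _ => hθnn _) ((summable_nat_add_iff N).mpr hθsum)
    have hXnn : (0:ℝ) ≤ A^2 * D * (ρ^n * aux16 α γ β n) :=
      mul_nonneg (mul_nonneg (sq_nonneg A) hD0.le) (hφnn n)
    have hmono := mul_le_mul_of_nonneg_left
      (show (∑ i ∈ Finset.Icc N (n-N), aux16 α (γ*(1-β)) β i) +
          (∑ i ∈ Finset.Icc N (n-N), aux16 α (γ*(1-β)) β i) ≤
          2 * (ε * a / (2 * D * A^2)) by linarith [hsub, hNtail]) hXnn
    have heq : (A^2 * D * (ρ^n * aux16 α γ β n)) * (2 * (ε * a / (2 * D * A^2))) =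
        ε * (a * (ρ^n * aux16 α γ β n)) := by
      field_simp
    have hfin := mul_le_mul_of_nonneg_left hlon hε.le
    linarith [heq.le, heq.ge]
  · -- odd case with vanishing odd terms: the sum is zero
    have hzero : ∀ i ∈ Finset.Icc N (n-N), u i * u (n-i) = 0 := by
      intro i hi
      rw [Finset.mem_Icc] at hi
      rcases Nat.even_or_odd i with ⟨t, ht⟩ | ⟨t, ht⟩
      · have hodd' : Odd (n - i) := by
          rcases Nat.even_or_odd (n-i) with ⟨s, hs⟩ | ho
          · exfalso
            exact hnodd ⟨t + s, by omega⟩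
          · exact ho
        obtain ⟨s, hs⟩ := hodd'
        rw [hs, hz s, mul_zero]
      · rw [ht, hz t, zero_mul]
    rw [Finset.sum_eq_zero hzero]
    exact mul_nonneg hε.le (hu n)
end

section
/- Let ρ ∈ (0,1] and let u : ℕ → [0,∞) be a sequence such that there are constants 0 < c ≤ C with c·ρ^{2n}·e^{−n/log n} ≤ u_{2n} ≤ C·ρ^{2n}·e^{−n/log n} for all n ≥ 2, and such that either u_{2n+1} = 0 for all n ≥ 0, or lim_{n→∞} u_{n+1}/u_n = ρ. Then for every ε > 0 there exists N > 0 such that for all n ≥ 2N: Σ_{i=N}^{n−N} u_i·u_{n−i} ≤ ε·u_n. -/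
/-!
With `f x = x / log x`, the hypotheses say `u_m ≍ ρ^m e^{-f(m/2)}` for large `m` (for odd `m` via
`u_{m+1}/u_m → ρ`, unless the odd terms vanish). For large `x` the function `f` is concave with
`f' ≤ 1`, and `f a + f b - f (a + b) ≥ a / log² a ≥ 2 log a + 1` for `a ≤ b`; hence
`e^{-f a} e^{-f b} ≤ a⁻² e^{-f(a+b)}`, i.e. `u_i u_j ≲ (i⁻² + j⁻²) u_{i+j}`. Summing over
`N ≤ i ≤ n - N` bounds the convolution by `u_n` times a tail of `∑ i⁻²`, which is `O(1/N)`.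
-/

open Filter Real

lemma hasDerivAt_div_log {x : ℝ} (hx : 1 < x) :
    HasDerivAt (fun y => y / log y) ((log x - 1) / log x ^ 2) x := by
  refine ((hasDerivAt_id' x).div (hasDerivAt_log (by positivity)) (log_pos hx).ne').congr_deriv ?_
  field_simp

lemma sub_one_div_sq_antitoneOn : AntitoneOn (fun t : ℝ => (t - 1) / t ^ 2) (Set.Ici 2) := by
  intro s (hs : 2 ≤ s) t (ht : 2 ≤ t) hst
  dsimp only
  rw [div_le_div_iff₀ (by positivity) (by positivity)]
  nlinarith [mul_nonneg (sub_nonneg.2 hst) (by nlinarith : (0 : ℝ) ≤ s * t - s - t)]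

lemma div_log_sub_div_log_le {x y : ℝ} (hx : exp 2 ≤ x) (hxy : x ≤ y) :
    y / log y - x / log x ≤ (log x - 1) / log x ^ 2 * (y - x) := by
  have one_lt : ∀ z, x ≤ z → 1 < z := fun z hz => (one_lt_exp_iff.2 two_pos).trans_le (hx.trans hz)
  have two_le_log : ∀ z, x ≤ z → 2 ≤ log z := fun z hz =>
    (le_log_iff_exp_le (by linarith [one_lt z hz])).2 (hx.trans hz)
  refine (convex_Ici x).image_sub_le_mul_sub_of_deriv_le
    (fun z hz => (hasDerivAt_div_log (one_lt z hz)).continuousAt.continuousWithinAt)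
    (fun z hz => ?_) (fun z hz => ?_) x Set.self_mem_Ici y hxy hxy
  all_goals rw [interior_Ici] at hz
  · exact (hasDerivAt_div_log (one_lt z hz.le)).differentiableAt.differentiableWithinAt
  · rw [(hasDerivAt_div_log (one_lt z hz.le)).deriv]
    exact sub_one_div_sq_antitoneOn (two_le_log x le_rfl) (two_le_log z hz.le)
      (log_le_log (by linarith [one_lt x le_rfl]) hz.le)

lemma div_log_add_le {a b : ℝ} (ha : exp 2 ≤ a) (hab : a ≤ b) :
    (a + b) / log (a + b) + a / log a ^ 2 ≤ a / log a + b / log b := by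
  have hb : exp 2 ≤ b := ha.trans hab
  have two_le_log : ∀ z, exp 2 ≤ z → 2 ≤ log z := fun z hz =>
    (le_log_iff_exp_le ((exp_pos 2).trans_le hz)).2 hz
  have hincr := div_log_sub_div_log_le hb (by linarith [(exp_pos 2).trans_le ha] : b ≤ a + b)
  have hderiv := sub_one_div_sq_antitoneOn (two_le_log a ha) (two_le_log b hb)
    (log_le_log ((exp_pos 2).trans_le ha) hab)
  have hid : (log a - 1) / log a ^ 2 * a + a / log a ^ 2 = a / log a := by
    have := two_le_log a ha
    field_simp
    ring
  dsimp only at hderiv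
  nlinarith [(exp_pos 2).trans_le ha]

lemma eventually_two_mul_log_add_one_le : ∀ᶠ x in atTop, 2 * log x + 1 ≤ x / log x ^ 2 := by
  filter_upwards [(isLittleO_pow_log_id_atTop (n := 3)).bound (by norm_num : (0 : ℝ) < 1 / 3),
    eventually_ge_atTop (exp 1)] with x hbound hx
  have hlog : 1 ≤ log x := (le_log_iff_exp_le ((exp_pos 1).trans_le hx)).2 hx
  have hx0 : 0 ≤ x := (exp_pos 1).le.trans hx
  rw [Real.norm_eq_abs, Real.norm_eq_abs, abs_of_nonneg (by positivity), id, abs_of_nonneg hx0]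
    at hbound
  rw [le_div_iff₀ (by positivity)]
  nlinarith [pow_pos (show (0:ℝ) < log x by linarith) 2]

lemma exp_neg_div_log_mul_le_of_le {a b s : ℝ} (ha : exp 2 ≤ a)
    (hlog : 2 * log a + 1 ≤ a / log a ^ 2) (hab : a ≤ b) (hs : a + b ≤ s) (hs' : s ≤ a + b + 1) :
    exp (-a / log a) * exp (-b / log b) ≤ (a ^ 2)⁻¹ * exp (-s / log s) := by
  have ha0 : 0 < a := (exp_pos 2).trans_le ha
  have hab2 : exp 2 ≤ a + b := by linarith
  have hL : 2 ≤ log (a + b) := (le_log_iff_exp_le (by linarith)).2 hab2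
  have hslope : (log (a + b) - 1) / log (a + b) ^ 2 ≤ 1 := by
    rw [div_le_one (by positivity)]
    nlinarith
  have hstep : s / log s - (a + b) / log (a + b) ≤ 1 := by
    have := div_log_sub_div_log_le hab2 hs
    have : 0 ≤ (log (a + b) - 1) / log (a + b) ^ 2 := div_nonneg (by linarith) (sq_nonneg _)
    nlinarith
  have hsuper := div_log_add_le ha hab
  have hexp : -a / log a + -b / log b ≤ -s / log s - log (a ^ 2) := by
    rw [log_pow, neg_div, neg_div, neg_div]
    push_cast
    linarith
  calc exp (-a / log a) * exp (-b / log b) ≤ exp (-s / log s - log (a ^ 2)) := by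
        rw [← exp_add]; exact exp_le_exp.2 hexp
    _ = (a ^ 2)⁻¹ * exp (-s / log s) := by
        rw [exp_sub, exp_log (by positivity), div_eq_inv_mul]

lemma exists_exp_neg_div_log_mul_le : ∃ A : ℝ, ∀ a b s : ℝ, A ≤ a → A ≤ b → a + b ≤ s →
    s ≤ a + b + 1 →
      exp (-a / log a) * exp (-b / log b) ≤ ((a ^ 2)⁻¹ + (b ^ 2)⁻¹) * exp (-s / log s) := by
  obtain ⟨A, hA⟩ := eventually_atTop.1
    (eventually_two_mul_log_add_one_le.and (eventually_ge_atTop (exp 2)))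
  refine ⟨A, fun a b s ha hb hs hs' => ?_⟩
  have hE := exp_pos (-s / log s)
  rcases le_total a b with hab | hba
  · have := exp_neg_div_log_mul_le_of_le (hA a ha).2 (hA a ha).1 hab hs hs'
    nlinarith [inv_nonneg.2 (sq_nonneg b)]
  · have := exp_neg_div_log_mul_le_of_le (hA b hb).2 (hA b hb).1 hba
      (by linarith : b + a ≤ s) (by linarith)
    nlinarith [inv_nonneg.2 (sq_nonneg a)]

noncomputable def envelope (ρ : ℝ) (m : ℕ) : ℝ :=
  ρ ^ m * exp (-((m / 2 : ℕ) : ℝ) / log ((m / 2 : ℕ) : ℝ))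

lemma envelope_two_mul (ρ : ℝ) (k : ℕ) :
    envelope ρ (2 * k) = ρ ^ (2 * k) * exp (-(k : ℝ) / log k) := by
  rw [envelope, Nat.mul_div_cancel_left k two_pos]

lemma envelope_two_mul_add_one (ρ : ℝ) (k : ℕ) :
    envelope ρ (2 * k + 1) = ρ * envelope ρ (2 * k) := by
  rw [envelope, envelope, show (2 * k + 1) / 2 = 2 * k / 2 by omega, pow_succ]
  ring

lemma envelope_pos {ρ : ℝ} (hρ : 0 < ρ) (m : ℕ) : 0 < envelope ρ m := by
  unfold envelope; positivity

lemma inv_sq_half_le {i : ℕ} (hi : 2 ≤ i) :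
    ((((i / 2 : ℕ) : ℝ)) ^ 2)⁻¹ ≤ 9 * ((i : ℝ) ^ 2)⁻¹ := by
  have h3 : (i : ℝ) ≤ 3 * ((i / 2 : ℕ) : ℝ) := by exact_mod_cast (by omega : i ≤ 3 * (i / 2))
  have hpos : (0 : ℝ) < i := by exact_mod_cast (by omega : 0 < i)
  have hhalf : (0 : ℝ) < ((i / 2 : ℕ) : ℝ) := by exact_mod_cast (by omega : 0 < i / 2)
  rw [← div_eq_mul_inv, ← inv_div, inv_le_inv₀ (by positivity) (by positivity)]
  nlinarith

lemma exists_envelope_mul_le {ρ : ℝ} (hρ : 0 ≤ ρ) : ∃ M : ℕ, ∀ i j : ℕ, M ≤ i → M ≤ j →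
    envelope ρ i * envelope ρ j ≤
      9 * (((i : ℝ) ^ 2)⁻¹ + ((j : ℝ) ^ 2)⁻¹) * envelope ρ (i + j) := by
  obtain ⟨A, hA⟩ := exists_exp_neg_div_log_mul_le
  refine ⟨2 * ⌈A⌉₊ + 2, fun i j hi hj => ?_⟩
  have le_half {m : ℕ} (hm : 2 * ⌈A⌉₊ + 2 ≤ m) : A ≤ ((m / 2 : ℕ) : ℝ) :=
    (Nat.le_ceil A).trans (by exact_mod_cast (by omega : ⌈A⌉₊ ≤ m / 2))
  have hs : ((i / 2 : ℕ) : ℝ) + ((j / 2 : ℕ) : ℝ) ≤ (((i + j) / 2 : ℕ) : ℝ) := by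
    exact_mod_cast (by omega : i / 2 + j / 2 ≤ (i + j) / 2)
  have hs' : (((i + j) / 2 : ℕ) : ℝ) ≤ ((i / 2 : ℕ) : ℝ) + ((j / 2 : ℕ) : ℝ) + 1 := by
    exact_mod_cast (by omega : (i + j) / 2 ≤ i / 2 + j / 2 + 1)
  have hexp := hA _ _ _ (le_half hi) (le_half hj) hs hs'
  have hhalf :=
    add_le_add (inv_sq_half_le (i := i) (by omega)) (inv_sq_half_le (i := j) (by omega))
  have hE := exp_pos (-(((i + j) / 2 : ℕ) : ℝ) / log (((i + j) / 2 : ℕ) : ℝ))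
  unfold envelope
  rw [pow_add]
  calc ρ ^ i * exp (-((i / 2 : ℕ) : ℝ) / log ((i / 2 : ℕ) : ℝ)) *
        (ρ ^ j * exp (-((j / 2 : ℕ) : ℝ) / log ((j / 2 : ℕ) : ℝ)))
      = ρ ^ i * ρ ^ j * (exp (-((i / 2 : ℕ) : ℝ) / log ((i / 2 : ℕ) : ℝ)) *
          exp (-((j / 2 : ℕ) : ℝ) / log ((j / 2 : ℕ) : ℝ))) := by ring
    _ ≤ ρ ^ i * ρ ^ j * (9 * (((i : ℝ) ^ 2)⁻¹ + ((j : ℝ) ^ 2)⁻¹) *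
          exp (-(((i + j) / 2 : ℕ) : ℝ) / log (((i + j) / 2 : ℕ) : ℝ))) := by
        refine mul_le_mul_of_nonneg_left (hexp.trans ?_) (by positivity)
        exact mul_le_mul_of_nonneg_right (by linarith) hE.le
    _ = _ := by ring

lemma mul_le_of_envelope_bounds {x y z p q r c C B : ℝ} (hc : 0 < c) (hB : 0 ≤ B)
    (hx : 0 ≤ x) (hy : 0 ≤ y) (hxp : x ≤ C * p) (hyq : y ≤ C * q) (hpq : p * q ≤ B * r)
    (hrz : c * r ≤ z) : x * y ≤ C ^ 2 / c * B * z := by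
  have hr : r ≤ z / c := by rw [le_div_iff₀ hc]; linarith
  calc x * y ≤ C * p * (C * q) := mul_le_mul hxp hyq hy (hx.trans hxp)
    _ = C ^ 2 * (p * q) := by ring
    _ ≤ C ^ 2 * (B * (z / c)) :=
        mul_le_mul_of_nonneg_left (hpq.trans (mul_le_mul_of_nonneg_left hr hB)) (sq_nonneg C)
    _ = C ^ 2 / c * B * z := by ring

def HasInvSqProductBound (u : ℕ → ℝ) : Prop :=
  ∃ K : ℝ, 0 ≤ K ∧ ∃ N₀ : ℕ, ∀ i j : ℕ, N₀ ≤ i → N₀ ≤ j →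
    u i * u j ≤ K * (((i : ℝ) ^ 2)⁻¹ + ((j : ℝ) ^ 2)⁻¹) * u (i + j)

section EnvelopeBounds

variable {ρ c C : ℝ} {u : ℕ → ℝ}

lemma hasInvSqProductBound_of_envelope_bounds (hu : ∀ n, 0 ≤ u n) (hρ : 0 ≤ ρ) (hc : 0 < c)
    (M : ℕ) (hbounds : ∀ i j, M ≤ i → M ≤ j → u i * u j ≠ 0 →
      u i ≤ C * envelope ρ i ∧ u j ≤ C * envelope ρ j ∧ c * envelope ρ (i + j) ≤ u (i + j)) :
    HasInvSqProductBound u := by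
  obtain ⟨M', hM'⟩ := exists_envelope_mul_le hρ
  refine ⟨C ^ 2 / c * 9, by positivity, max M M', fun i j hi hj => ?_⟩
  have hX : 0 ≤ ((i : ℝ) ^ 2)⁻¹ + ((j : ℝ) ^ 2)⁻¹ := by positivity
  by_cases hzero : u i * u j = 0
  · rw [hzero]
    have := hu (i + j)
    positivity
  obtain ⟨hui, huj, hun⟩ := hbounds i j (le_of_max_le_left hi) (le_of_max_le_left hj) hzero
  rw [mul_assoc _ 9]
  exact mul_le_of_envelope_bounds hc (by positivity) (hu i) (hu j) hui huj
    (hM' i j (le_of_max_le_right hi) (le_of_max_le_right hj)) hun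

lemma hasInvSqProductBound_of_odd_eq_zero (hu : ∀ n, 0 ≤ u n) (hρ : 0 ≤ ρ) (hc : 0 < c)
    (hlow : ∀ k, 2 ≤ k → c * envelope ρ (2 * k) ≤ u (2 * k))
    (hup : ∀ k, 2 ≤ k → u (2 * k) ≤ C * envelope ρ (2 * k))
    (hodd : ∀ k, u (2 * k + 1) = 0) : HasInvSqProductBound u := by
  refine hasInvSqProductBound_of_envelope_bounds (C := C) hu hρ hc 4 fun i j hi hj hne => ?_
  obtain ⟨a, rfl | rfl⟩ := Nat.even_or_odd' i
  · obtain ⟨b, rfl | rfl⟩ := Nat.even_or_odd' j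
    · exact ⟨hup a (by omega), hup b (by omega), by rw [← mul_add]; exact hlow _ (by omega)⟩
    · simp [hodd] at hne
  · simp [hodd] at hne

lemma exists_envelope_bounds_of_tendsto_ratio (hu : ∀ n, 0 ≤ u n) (hρ : 0 < ρ) (hc : 0 < c)
    (hlow : ∀ k, 2 ≤ k → c * envelope ρ (2 * k) ≤ u (2 * k))
    (hup : ∀ k, 2 ≤ k → u (2 * k) ≤ C * envelope ρ (2 * k))
    (hratio : Tendsto (fun n => u (n + 1) / u n) atTop (nhds ρ)) :
    ∃ M : ℕ, ∀ m, M ≤ m → c / 2 * envelope ρ m ≤ u m ∧ u m ≤ 2 * C * envelope ρ m := by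
  obtain ⟨M, hM⟩ := eventually_atTop.1 (hratio.eventually (Ioo_mem_nhds
    (half_lt_self hρ) (by linarith : ρ < 2 * ρ)))
  refine ⟨2 * M + 4, fun m hm => ?_⟩
  obtain ⟨k, rfl | rfl⟩ := Nat.even_or_odd' m
  · have := envelope_pos hρ (2 * k)
    have := hlow k (by omega)
    have := hup k (by omega)
    have := hu (2 * k)
    constructor <;> nlinarith
  · have henv := envelope_pos hρ (2 * k)
    have hl := hlow k (by omega)
    have hC := hup k (by omega)
    have hpos : 0 < u (2 * k) := (mul_pos hc henv).trans_le hl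
    obtain ⟨hgt, hlt⟩ := hM (2 * k) (by omega)
    rw [lt_div_iff₀ hpos] at hgt
    rw [div_lt_iff₀ hpos] at hlt
    rw [envelope_two_mul_add_one]
    constructor <;> nlinarith

lemma hasInvSqProductBound_of_tendsto_ratio (hu : ∀ n, 0 ≤ u n) (hρ : 0 < ρ) (hc : 0 < c)
    (hlow : ∀ k, 2 ≤ k → c * envelope ρ (2 * k) ≤ u (2 * k))
    (hup : ∀ k, 2 ≤ k → u (2 * k) ≤ C * envelope ρ (2 * k))
    (hratio : Tendsto (fun n => u (n + 1) / u n) atTop (nhds ρ)) : HasInvSqProductBound u := by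
  obtain ⟨M, hM⟩ := exists_envelope_bounds_of_tendsto_ratio hu hρ hc hlow hup hratio
  refine hasInvSqProductBound_of_envelope_bounds hu hρ.le (half_pos hc) M
    fun i j hi hj _ => ⟨(hM i hi).2, (hM j hj).2, (hM (i + j) (by omega)).1⟩

end EnvelopeBounds

lemma sum_Icc_reflect (f : ℕ → ℝ) {N n : ℕ} (h : 2 * N ≤ n) :
    ∑ i ∈ Finset.Icc N (n - N), f (n - i) = ∑ i ∈ Finset.Icc N (n - N), f i := by
  refine Finset.sum_nbij' (fun i => n - i) (fun i => n - i) ?_ ?_ ?_ ?_ (fun _ _ => rfl) <;>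
    intro i hi <;> simp only [Finset.mem_Icc] at hi ⊢ <;> omega

lemma sum_Icc_inv_sq_le {N : ℕ} (hN : 0 < N) (M : ℕ) :
    ∑ i ∈ Finset.Icc N M, ((i : ℝ) ^ 2)⁻¹ ≤ 2 / N := by
  have hsub : Finset.Icc N M ⊆ Finset.Ioo (N - 1) (M + 1) := by
    intro i; simp only [Finset.mem_Icc, Finset.mem_Ioo]; omega
  calc ∑ i ∈ Finset.Icc N M, ((i : ℝ) ^ 2)⁻¹
      ≤ ∑ i ∈ Finset.Ioo (N - 1) (M + 1), ((i : ℝ) ^ 2)⁻¹ :=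
        Finset.sum_le_sum_of_subset_of_nonneg hsub fun _ _ _ => by positivity
    _ ≤ 2 / ((N - 1 : ℕ) + 1) := sum_Ioo_inv_sq_le _ _
    _ = 2 / N := by rw [Nat.cast_sub hN, Nat.cast_one, sub_add_cancel]

lemma HasInvSqProductBound.sum_Icc_mul_le {u : ℕ → ℝ} (hbound : HasInvSqProductBound u)
    (hu : ∀ n, 0 ≤ u n) {ε : ℝ} (hε : 0 < ε) : ∃ N : ℕ, 0 < N ∧ ∀ n : ℕ, 2 * N ≤ n →
      ∑ i ∈ Finset.Icc N (n - N), u i * u (n - i) ≤ ε * u n := by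
  obtain ⟨K, hK, N₀, hN₀⟩ := hbound
  obtain ⟨N₁, hN₁⟩ := exists_nat_gt (4 * K / ε)
  refine ⟨max (N₀ + 1) N₁, by omega, fun n hn => ?_⟩
  set N := max (N₀ + 1) N₁
  have hN : (0 : ℝ) < N := by exact_mod_cast (by omega : 0 < N)
  have hKN : 4 * K / N ≤ ε := by
    rw [div_le_iff₀ hN, ← div_le_iff₀' hε]
    exact hN₁.le.trans (by exact_mod_cast le_max_right _ _)
  have hterm : ∀ i ∈ Finset.Icc N (n - N),
      u i * u (n - i) ≤ K * u n * (((i : ℝ) ^ 2)⁻¹ + (((n - i : ℕ) : ℝ) ^ 2)⁻¹) := by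
    intro i hi
    rw [Finset.mem_Icc] at hi
    have := hN₀ i (n - i) (by omega) (by omega)
    rw [Nat.add_sub_cancel' (by omega)] at this
    linarith
  have hsum := sum_Icc_inv_sq_le (by omega : 0 < N) (n - N)
  calc ∑ i ∈ Finset.Icc N (n - N), u i * u (n - i)
      ≤ ∑ i ∈ Finset.Icc N (n - N), K * u n * (((i : ℝ) ^ 2)⁻¹ + (((n - i : ℕ) : ℝ) ^ 2)⁻¹) :=
        Finset.sum_le_sum hterm
    _ = K * u n * (2 * ∑ i ∈ Finset.Icc N (n - N), ((i : ℝ) ^ 2)⁻¹) := by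
        rw [← Finset.mul_sum, Finset.sum_add_distrib,
          sum_Icc_reflect (fun i => ((i : ℝ) ^ 2)⁻¹) hn, two_mul]
    _ ≤ K * u n * (2 * (2 / N)) := by gcongr; exact mul_nonneg hK (hu n)
    _ = 4 * K / N * u n := by ring
    _ ≤ ε * u n := mul_le_mul_of_nonneg_right hKN (hu n)

theorem stmt17_general (ρ : ℝ) (hρ0 : 0 < ρ)
    (u : ℕ → ℝ) (hu : ∀ n, 0 ≤ u n)
    (c C : ℝ) (hc : 0 < c)
    (hlow : ∀ n : ℕ, 2 ≤ n →
      c * ρ ^ (2 * n) * Real.exp (-(n : ℝ) / Real.log n) ≤ u (2 * n))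
    (hup : ∀ n : ℕ, 2 ≤ n →
      u (2 * n) ≤ C * ρ ^ (2 * n) * Real.exp (-(n : ℝ) / Real.log n))
    (hodd : (∀ n : ℕ, u (2 * n + 1) = 0) ∨
      Tendsto (fun n : ℕ => u (n + 1) / u n) atTop (nhds ρ)) :
    ∀ ε : ℝ, 0 < ε → ∃ N : ℕ, 0 < N ∧ ∀ n : ℕ, 2 * N ≤ n →
      ∑ i ∈ Finset.Icc N (n - N), u i * u (n - i) ≤ ε * u n := by
  intro ε hε
  have hlow' : ∀ k, 2 ≤ k → c * envelope ρ (2 * k) ≤ u (2 * k) := fun k hk => by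
    simpa only [envelope_two_mul, mul_assoc] using hlow k hk
  have hup' : ∀ k, 2 ≤ k → u (2 * k) ≤ C * envelope ρ (2 * k) := fun k hk => by
    simpa only [envelope_two_mul, mul_assoc] using hup k hk
  have hbound : HasInvSqProductBound u := by
    rcases hodd with hodd | hratio
    · exact hasInvSqProductBound_of_odd_eq_zero hu hρ0.le hc hlow' hup' hodd
    · exact hasInvSqProductBound_of_tendsto_ratio hu hρ0 hc hlow' hup' hratio
  exact hbound.sum_Icc_mul_le hu hε

/-- Let `ρ ∈ (0,1]` and let `u : ℕ → [0,∞)` satisfy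
`u_{2n} ≍ ρ^{2n}·e^{-n/log n}` (for `n ≥ 2`) and the odd-term dichotomy (either all odd terms
vanish or `u_{n+1}/u_n → ρ`). Then for every `ε > 0` there is `N > 0` with
`Σ_{i=N}^{n-N} u_i·u_{n-i} ≤ ε·u_n` for all `n ≥ 2N`. -/
theorem stmt17 (ρ : ℝ) (hρ0 : 0 < ρ) (hρ1 : ρ ≤ 1)
    (u : ℕ → ℝ) (hu : ∀ n, 0 ≤ u n)
    (c C : ℝ) (hc : 0 < c) (hcC : c ≤ C)
    (hlow : ∀ n : ℕ, 2 ≤ n →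
      c * ρ ^ (2 * n) * Real.exp (-(n : ℝ) / Real.log n) ≤ u (2 * n))
    (hup : ∀ n : ℕ, 2 ≤ n →
      u (2 * n) ≤ C * ρ ^ (2 * n) * Real.exp (-(n : ℝ) / Real.log n))
    (hodd : (∀ n : ℕ, u (2 * n + 1) = 0) ∨
      Tendsto (fun n : ℕ => u (n + 1) / u n) atTop (nhds ρ)) :
    ∀ ε : ℝ, 0 < ε → ∃ N : ℕ, 0 < N ∧ ∀ n : ℕ, 2 * N ≤ n →
      ∑ i ∈ Finset.Icc N (n - N), u i * u (n - i) ≤ ε * u n :=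
  stmt17_general ρ hρ0 u hu c C hc hlow hup hodd
end

section
/- Let G = (V,E) be a locally finite, connected graph and Γ a subgroup of the automorphism group of G acting quasi-transitively on V, with orbit representatives o_1,…,o_L, index set I = {1,…,L}, and d_i the degree of vertices in Γo_i. Let A = (a(i,j))_{i,j∈I} with a(i,j) = Σ_{y ∈ Γo_j, y ~ o_i} (d_i d_j)^{−1/2} √Δ(o_i,y), and suppose v : I → (0,∞) satisfies A v = λ v for some λ > 0. Set π_i = v_i² and define the induced transition matrix P̃(i,j) = (v_j/(λ·v_i))·a(i,j). Then: (a) P̃ is stochastic (Σ_j P̃(i,j) = 1 for each i) and π is a stationary measure for P̃, i.e. Σ_{i∈I} π_i·P̃(i,j) = π_j for every j ∈ I; and (b) the mean increment of log Δ under the stationary start vanishes: Σ_{i,j∈I} Σ_{y ∈ Γo_j, y ~ o_i} π_i · (1/λ)·(v_j/v_i)·(d_i d_j)^{−1/2}·√Δ(o_i,y) · log Δ(o_i,y) = 0. -/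
open SimpleGraph MulAction

attribute [local instance] Classical.propDecidable
set_option linter.unusedSectionVars false
set_option linter.unusedVariables false
set_option maxHeartbeats 1000000

/-- The matrix `a(i,j) = Σ_{y ∈ Γo_j, y ~ o_i} (d_i d_j)^{-1/2} √Δ(o_i,y)` associated to a
quasi-transitive action with orbit representatives `o : Fin L → V`. -/
noncomputable def matA {V : Type*} [DecidableEq V] (G : SimpleGraph V) [G.LocallyFinite]
    (Γ : Type*) [Group Γ] [MulAction Γ V] {L : ℕ} (o : Fin L → V) (i j : Fin L) : ℝ :=
  ∑ y ∈ (G.neighborFinset (o i)).filter (fun y => y ∈ MulAction.orbit Γ (o j)),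
    ((G.degree (o i) : ℝ) * (G.degree (o j) : ℝ)) ^ (-(1 : ℝ) / 2) *
      Real.sqrt (modular Γ (o i) y)

section Aux
variable {V : Type*} {Γ : Type*} [Group Γ] [MulAction Γ V]

lemma mem_orbit_stab_iff {x y z : V} :
    z ∈ orbit (stabilizer Γ x) y ↔ ∃ g : Γ, g • x = x ∧ g • y = z := by
  rw [mem_orbit_iff]
  constructor
  · rintro ⟨⟨g, hg⟩, rfl⟩; exact ⟨g, hg, rfl⟩
  · rintro ⟨g, hg1, hg2⟩; exact ⟨⟨g, hg1⟩, hg2⟩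

lemma orbit_stab_smul (γ : Γ) (x y : V) :
    orbit (stabilizer Γ (γ • x)) (γ • y) = (γ • ·) '' orbit (stabilizer Γ x) y := by
  ext z
  rw [mem_orbit_stab_iff]
  constructor
  · rintro ⟨g, hg1, hg2⟩
    refine ⟨(γ⁻¹ * g * γ) • y, mem_orbit_stab_iff.mpr ⟨γ⁻¹ * g * γ, ?_, rfl⟩, ?_⟩
    · have := hg1
      rw [mul_smul, mul_smul, inv_smul_eq_iff]
      exact hg1
    · simp only [mul_smul]
      rw [smul_inv_smul]
      exact hg2
  · rintro ⟨w, hw, rfl⟩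
    obtain ⟨g, hg1, hg2⟩ := mem_orbit_stab_iff.mp hw
    refine ⟨γ * g * γ⁻¹, ?_, ?_⟩
    · rw [mul_smul, mul_smul, inv_smul_smul, hg1]
    · rw [mul_smul, mul_smul, inv_smul_smul, hg2]

lemma ncard_orbit_stab_smul (γ : Γ) (x y : V) :
    (orbit (stabilizer Γ (γ • x)) (γ • y)).ncard = (orbit (stabilizer Γ x) y).ncard := by
  rw [orbit_stab_smul, Set.ncard_image_of_injective _ (MulAction.injective γ)]

lemma modular_smul_s19 (γ : Γ) (x y : V) : modular Γ (γ • x) (γ • y) = modular Γ x y := by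
  unfold modular
  rw [ncard_orbit_stab_smul, ncard_orbit_stab_smul]

lemma modular_inv (x y : V) : modular Γ y x = (modular Γ x y)⁻¹ := by
  unfold modular
  rw [inv_div]

end Aux

section Graph
variable {V : Type*} [DecidableEq V] (G : SimpleGraph V) [G.LocallyFinite]
  (Γ : Type*) [Group Γ] [MulAction Γ V]

variable (hauto : ∀ (γ : Γ) (u v : V), G.Adj (γ • u) (γ • v) ↔ G.Adj u v)
include hauto

lemma orbit_subset_neighbor {a b : V} (hab : G.Adj a b) :
    orbit (stabilizer Γ a) b ⊆ G.neighborSet a := by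
  intro z hz
  obtain ⟨g, hg1, hg2⟩ := mem_orbit_stab_iff.mp hz
  have : G.Adj (g • a) (g • b) := (hauto g a b).mpr hab
  rw [hg1, hg2] at this
  exact this

lemma orbit_stab_finite {a b : V} (hab : G.Adj a b) :
    (orbit (stabilizer Γ a) b).Finite :=
  Set.Finite.subset (G.neighborSet a).toFinite (orbit_subset_neighbor G Γ hauto hab)

lemma ncard_orbit_pos {a b : V} (hab : G.Adj a b) :
    0 < (orbit (stabilizer Γ a) b).ncard :=
  (Set.ncard_pos (orbit_stab_finite G Γ hauto hab)).mpr ⟨b, mem_orbit_self b⟩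

lemma modular_pos {a b : V} (hab : G.Adj a b) : 0 < modular Γ a b := by
  unfold modular
  have h1 := ncard_orbit_pos G Γ hauto hab.symm
  have h2 := ncard_orbit_pos G Γ hauto hab
  apply div_pos <;> [exact_mod_cast h1; exact_mod_cast h2]

end Graph

section Transport
variable {V : Type*} [DecidableEq V] (G : SimpleGraph V) [G.LocallyFinite]
  (Γ : Type*) [Group Γ] [MulAction Γ V]

variable (hauto : ∀ (γ : Γ) (u v : V), G.Adj (γ • u) (γ • v) ↔ G.Adj u v)
include hauto

lemma transport (a b : V) (F : V → V → ℝ)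
    (hF : ∀ (γ : Γ) (x y : V), F (γ • x) (γ • y) = F x y) :
    ∑ y ∈ (G.neighborFinset a).filter (fun y => y ∈ orbit Γ b),
        F a y / ((orbit (stabilizer Γ a) y).ncard : ℝ) =
    ∑ x ∈ (G.neighborFinset b).filter (fun x => x ∈ orbit Γ a),
        F x b / ((orbit (stabilizer Γ b) x).ncard : ℝ) := by
  set n : V → V → ℝ := fun p q => ((orbit (stabilizer Γ p) q).ncard : ℝ) with hn
  set Sab := (G.neighborFinset a).filter (fun y => y ∈ orbit Γ b) with hSab
  set Sba := (G.neighborFinset b).filter (fun x => x ∈ orbit Γ a) with hSba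
  set R : V → V → Prop := fun x y => ∃ γ : Γ, γ • x = a ∧ γ • b = y with hR
  set w : V → V → ℝ := fun x y => F a y / (n a y * n b x) with hw
  have key1 : ∀ x ∈ Sba, (∑ y ∈ Sab, if R x y then w x y else 0) = F x b / n b x := by
    intro x hx
    rw [hSba, Finset.mem_filter, mem_neighborFinset] at hx
    obtain ⟨hadjbx, δ, hδ⟩ := hx
    simp only at hδ
    set γ0 : Γ := δ⁻¹ with hγ0
    have hγ0x : γ0 • x = a := by rw [hγ0, ← hδ, inv_smul_smul]
    set y0 : V := γ0 • b with hy0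
    have hadjy0 : G.Adj a y0 := by
      have h := (hauto γ0 b x).mpr hadjbx
      rw [hγ0x, ← hy0] at h
      exact h.symm
    set O := orbit (stabilizer Γ a) y0 with hO
    have hOfin : O.Finite := orbit_stab_finite G Γ hauto hadjy0
    have hfib : ∀ y, (y ∈ Sab ∧ R x y) ↔ y ∈ O := by
      intro y
      constructor
      · rintro ⟨-, γ, hγ1, hγ2⟩
        refine mem_orbit_stab_iff.mpr ⟨γ * γ0⁻¹, ?_, ?_⟩
        · have hxa : γ0⁻¹ • a = x := by rw [← hγ0x, inv_smul_smul]
          rw [mul_smul, hxa, hγ1]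
        · rw [mul_smul, hy0, inv_smul_smul, hγ2]
      · intro hy
        obtain ⟨g, hg1, hg2⟩ := mem_orbit_stab_iff.mp hy
        have hRxy : R x y := by
          refine ⟨g * γ0, ?_, ?_⟩
          · rw [mul_smul, hγ0x, hg1]
          · rw [mul_smul, ← hy0, hg2]
        refine ⟨?_, hRxy⟩
        rw [hSab, Finset.mem_filter, mem_neighborFinset]
        constructor
        · have h := (hauto g a y0).mpr hadjy0
          rwa [hg1, hg2] at h
        · obtain ⟨γ, hγ1, hγ2⟩ := hRxy
          exact ⟨γ, hγ2⟩
    have hfil : Sab.filter (fun y => R x y) = hOfin.toFinset := by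
      ext y
      rw [Finset.mem_filter, Set.Finite.mem_toFinset]
      exact hfib y
    rw [← Finset.sum_filter, hfil]
    have hconst : ∀ y ∈ hOfin.toFinset, w x y = F x b / (n a y0 * n b x) := by
      intro y hy
      rw [Set.Finite.mem_toFinset] at hy
      obtain ⟨g, hg1, hg2⟩ := mem_orbit_stab_iff.mp hy
      have h1 : F a y = F x b := by
        rw [← hg1, ← hg2, hF, ← hγ0x, hy0, hF]
      have h2 : n a y = n a y0 := by
        simp only [hn]
        rw [MulAction.orbit_eq_iff.mpr hy]
      simp only [hw]
      rw [h1, h2]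
    rw [Finset.sum_congr rfl hconst, Finset.sum_const]
    have hcard : hOfin.toFinset.card = O.ncard := (Set.ncard_eq_toFinset_card O hOfin).symm
    have hpos : (0:ℝ) < n a y0 := by
      simp only [hn]
      exact_mod_cast ncard_orbit_pos G Γ hauto hadjy0
    rw [hcard, nsmul_eq_mul]
    have hcast : ((O.ncard : ℕ) : ℝ) = n a y0 := rfl
    rw [hcast, div_mul_eq_div_div_swap, mul_comm, div_mul_cancel₀ _ (ne_of_gt hpos)]
  have key2 : ∀ y ∈ Sab, (∑ x ∈ Sba, if R x y then w x y else 0) = F a y / n a y := by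
    intro y hy
    rw [hSab, Finset.mem_filter, mem_neighborFinset] at hy
    obtain ⟨hadjay, γ1, hγ1⟩ := hy
    simp only at hγ1
    set x0 : V := γ1⁻¹ • a with hx0
    have hadjx0 : G.Adj b x0 := by
      have h := (hauto γ1⁻¹ a y).mpr hadjay
      rw [← hx0, ← hγ1, inv_smul_smul] at h
      exact h.symm
    set O := orbit (stabilizer Γ b) x0 with hO
    have hOfin : O.Finite := orbit_stab_finite G Γ hauto hadjx0
    have hfib : ∀ x, (x ∈ Sba ∧ R x y) ↔ x ∈ O := by
      intro x
      constructor
      · rintro ⟨-, γ, hc1, hc2⟩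
        refine mem_orbit_stab_iff.mpr ⟨γ⁻¹ * γ1, ?_, ?_⟩
        · rw [mul_smul, hγ1, ← hc2, inv_smul_smul]
        · rw [mul_smul, hx0, smul_inv_smul, ← hc1, inv_smul_smul]
      · intro hxO
        obtain ⟨g, hg1, hg2⟩ := mem_orbit_stab_iff.mp hxO
        have hRxy : R x y := by
          refine ⟨γ1 * g⁻¹, ?_, ?_⟩
          · rw [mul_smul, ← hg2, inv_smul_smul, hx0, smul_inv_smul]
          · rw [mul_smul, inv_smul_eq_iff.mpr hg1.symm, hγ1]
        refine ⟨?_, hRxy⟩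
        rw [hSba, Finset.mem_filter, mem_neighborFinset]
        constructor
        · have h := (hauto g b x0).mpr hadjx0
          rwa [hg1, hg2] at h
        · refine ⟨g * γ1⁻¹, ?_⟩
          simp only
          rw [mul_smul, ← hx0, hg2]
    have hfil : Sba.filter (fun x => R x y) = hOfin.toFinset := by
      ext x
      rw [Finset.mem_filter, Set.Finite.mem_toFinset]
      exact hfib x
    rw [← Finset.sum_filter, hfil]
    have hconst : ∀ x ∈ hOfin.toFinset, w x y = F a y / (n a y * n b x0) := by
      intro x hx
      rw [Set.Finite.mem_toFinset] at hx
      have h2 : n b x = n b x0 := by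
        simp only [hn]
        rw [MulAction.orbit_eq_iff.mpr hx]
      simp only [hw]
      rw [h2]
    rw [Finset.sum_congr rfl hconst, Finset.sum_const]
    have hcard : hOfin.toFinset.card = O.ncard := (Set.ncard_eq_toFinset_card O hOfin).symm
    have hpos : (0:ℝ) < n b x0 := by
      simp only [hn]
      exact_mod_cast ncard_orbit_pos G Γ hauto hadjx0
    rw [hcard, nsmul_eq_mul]
    have hcast : ((O.ncard : ℕ) : ℝ) = n b x0 := rfl
    rw [hcast, mul_comm (n a y) (n b x0), div_mul_eq_div_div_swap, mul_comm,
      div_mul_cancel₀ _ (ne_of_gt hpos)]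
  calc ∑ y ∈ Sab, F a y / ((orbit (stabilizer Γ a) y).ncard : ℝ)
      = ∑ y ∈ Sab, ∑ x ∈ Sba, if R x y then w x y else 0 :=
        Finset.sum_congr rfl fun y hy => (key2 y hy).symm
    _ = ∑ x ∈ Sba, ∑ y ∈ Sab, if R x y then w x y else 0 := Finset.sum_comm
    _ = ∑ x ∈ Sba, F x b / ((orbit (stabilizer Γ b) x).ncard : ℝ) :=
        Finset.sum_congr rfl fun x hx => key1 x hx


lemma transport_f (a b : V) (f : ℝ → ℝ) :
    ∑ y ∈ (G.neighborFinset a).filter (fun y => y ∈ orbit Γ b), f (modular Γ a y) =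
    ∑ x ∈ (G.neighborFinset b).filter (fun x => x ∈ orbit Γ a),
      f ((modular Γ b x)⁻¹) * modular Γ b x := by
  have h := transport G Γ hauto a b
    (fun x y => f (modular Γ x y) * ((orbit (stabilizer Γ x) y).ncard : ℝ))
    (by intro γ x y; rw [modular_smul_s19, ncard_orbit_stab_smul])
  calc ∑ y ∈ (G.neighborFinset a).filter (fun y => y ∈ orbit Γ b), f (modular Γ a y)
      = ∑ y ∈ (G.neighborFinset a).filter (fun y => y ∈ orbit Γ b),
          f (modular Γ a y) * ((orbit (stabilizer Γ a) y).ncard : ℝ) /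
            ((orbit (stabilizer Γ a) y).ncard : ℝ) := by
        refine Finset.sum_congr rfl fun y hy => ?_
        rw [Finset.mem_filter, mem_neighborFinset] at hy
        have hne : ((orbit (stabilizer Γ a) y).ncard : ℝ) ≠ 0 := by
          exact_mod_cast (ncard_orbit_pos G Γ hauto hy.1).ne'
        rw [mul_div_cancel_right₀ _ hne]
    _ = ∑ x ∈ (G.neighborFinset b).filter (fun x => x ∈ orbit Γ a),
          f (modular Γ x b) * ((orbit (stabilizer Γ x) b).ncard : ℝ) /
            ((orbit (stabilizer Γ b) x).ncard : ℝ) := h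
    _ = ∑ x ∈ (G.neighborFinset b).filter (fun x => x ∈ orbit Γ a),
          f ((modular Γ b x)⁻¹) * modular Γ b x := by
        refine Finset.sum_congr rfl fun x hx => ?_
        rw [← modular_inv, mul_div_assoc]
        rfl

lemma transport_sqrt (a b : V) :
    ∑ y ∈ (G.neighborFinset a).filter (fun y => y ∈ orbit Γ b),
      Real.sqrt (modular Γ a y) =
    ∑ x ∈ (G.neighborFinset b).filter (fun x => x ∈ orbit Γ a),
      Real.sqrt (modular Γ b x) := by
  rw [transport_f G Γ hauto a b Real.sqrt]
  refine Finset.sum_congr rfl fun x hx => ?_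
  rw [Real.sqrt_inv, inv_mul_eq_div, Real.div_sqrt]

lemma transport_sqrtlog (a b : V) :
    ∑ y ∈ (G.neighborFinset a).filter (fun y => y ∈ orbit Γ b),
      Real.sqrt (modular Γ a y) * Real.log (modular Γ a y) =
    - ∑ x ∈ (G.neighborFinset b).filter (fun x => x ∈ orbit Γ a),
      Real.sqrt (modular Γ b x) * Real.log (modular Γ b x) := by
  rw [transport_f G Γ hauto a b (fun t => Real.sqrt t * Real.log t), ← Finset.sum_neg_distrib]
  refine Finset.sum_congr rfl fun x hx => ?_
  beta_reduce
  rw [Real.sqrt_inv, Real.log_inv]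
  have h : (Real.sqrt (modular Γ b x))⁻¹ * modular Γ b x = Real.sqrt (modular Γ b x) := by
    rw [inv_mul_eq_div, Real.div_sqrt]
  calc (Real.sqrt (modular Γ b x))⁻¹ * -Real.log (modular Γ b x) * modular Γ b x
      = ((Real.sqrt (modular Γ b x))⁻¹ * modular Γ b x) * -Real.log (modular Γ b x) := by ring
    _ = Real.sqrt (modular Γ b x) * -Real.log (modular Γ b x) := by rw [h]
    _ = -(Real.sqrt (modular Γ b x) * Real.log (modular Γ b x)) := by ring

end Transport

section Main
variable {V : Type*} [DecidableEq V] (G : SimpleGraph V) [G.LocallyFinite]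
  (Γ : Type*) [Group Γ] [MulAction Γ V]

variable (hauto : ∀ (γ : Γ) (u v : V), G.Adj (γ • u) (γ • v) ↔ G.Adj u v)
include hauto

lemma matA_symm {L : ℕ} (o : Fin L → V) (i j : Fin L) :
    matA G Γ o i j = matA G Γ o j i := by
  unfold matA
  rw [← Finset.mul_sum, ← Finset.mul_sum, mul_comm ((G.degree (o i) : ℝ)) ((G.degree (o j) : ℝ)),
    transport_sqrt G Γ hauto (o i) (o j)]

end Main

/-- Let `G` be a locally finite, connected graph and `Γ` a group acting on it
by automorphisms, quasi-transitively, with orbit representatives `o_1,…,o_L`; suppose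
`v : I → (0,∞)` satisfies `A v = λ v` with `λ > 0`. Set `π_i = v_i²` and
`P̃(i,j) = (v_j/(λ·v_i))·a(i,j)`. Then (a) `P̃` is stochastic and `π` is stationary for `P̃`,
and (b) the mean increment of `log Δ` under the stationary start vanishes. -/
theorem stmt19 {V : Type*} [DecidableEq V] (G : SimpleGraph V) [G.LocallyFinite]
    (hconn : G.Connected)
    (Γ : Type*) [Group Γ] [MulAction Γ V]
    (hauto : ∀ (γ : Γ) (u v : V), G.Adj (γ • u) (γ • v) ↔ G.Adj u v)
    (L : ℕ) (o : Fin L → V)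
    (hcover : ∀ x : V, ∃ i : Fin L, x ∈ MulAction.orbit Γ (o i))
    (hdistinct : ∀ i j : Fin L, o i ∈ MulAction.orbit Γ (o j) → i = j)
    (v : Fin L → ℝ) (hv : ∀ i, 0 < v i)
    (lam : ℝ) (hlam : 0 < lam)
    (heig : ∀ i, ∑ j, matA G Γ o i j * v j = lam * v i)
    (π : Fin L → ℝ) (hπ : ∀ i, π i = v i ^ 2)
    (P : Fin L → Fin L → ℝ) (hP : ∀ i j, P i j = v j / (lam * v i) * matA G Γ o i j) :
    (∀ i, ∑ j, P i j = 1) ∧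
    (∀ j, ∑ i, π i * P i j = π j) ∧
    (∑ i, ∑ j, ∑ y ∈ (G.neighborFinset (o i)).filter (fun y => y ∈ MulAction.orbit Γ (o j)),
        π i * (1 / lam) * (v j / v i) *
          ((G.degree (o i) : ℝ) * (G.degree (o j) : ℝ)) ^ (-(1 : ℝ) / 2) *
          Real.sqrt (modular Γ (o i) y) * Real.log (modular Γ (o i) y)) = 0 := by
  have hvne : ∀ i, v i ≠ 0 := fun i => (hv i).ne'
  have hlamne : lam ≠ 0 := hlam.ne'
  refine ⟨?_, ?_, ?_⟩
  · intro i
    calc ∑ j, P i j = ∑ j, matA G Γ o i j * v j / (lam * v i) := by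
          refine Finset.sum_congr rfl fun j _ => ?_
          rw [hP]; ring
      _ = (∑ j, matA G Γ o i j * v j) / (lam * v i) := by rw [Finset.sum_div]
      _ = 1 := by rw [heig i]; exact div_self (mul_ne_zero hlamne (hvne i))
  · intro j
    calc ∑ i, π i * P i j = ∑ i, matA G Γ o j i * v i * (v j / lam) := by
          refine Finset.sum_congr rfl fun i _ => ?_
          rw [hπ, hP, matA_symm G Γ hauto o i j]
          field_simp [hvne i, hvne j, hlamne]
      _ = (∑ i, matA G Γ o j i * v i) * (v j / lam) := by rw [Finset.sum_mul]
      _ = π j := by rw [heig j, hπ]; field_simp [hlamne]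
  · set T : Fin L → Fin L → ℝ := fun i j =>
      ∑ y ∈ (G.neighborFinset (o i)).filter (fun y => y ∈ MulAction.orbit Γ (o j)),
        Real.sqrt (modular Γ (o i) y) * Real.log (modular Γ (o i) y) with hT
    set K : Fin L → Fin L → ℝ := fun i j =>
      π i * (1 / lam) * (v j / v i) *
        ((G.degree (o i) : ℝ) * (G.degree (o j) : ℝ)) ^ (-(1 : ℝ) / 2) with hK
    have hinner : ∀ i j : Fin L,
        (∑ y ∈ (G.neighborFinset (o i)).filter (fun y => y ∈ MulAction.orbit Γ (o j)),
          π i * (1 / lam) * (v j / v i) *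
            ((G.degree (o i) : ℝ) * (G.degree (o j) : ℝ)) ^ (-(1 : ℝ) / 2) *
            Real.sqrt (modular Γ (o i) y) * Real.log (modular Γ (o i) y)) = K i j * T i j := by
      intro i j
      rw [hK, hT]
      beta_reduce
      rw [Finset.mul_sum]
      refine Finset.sum_congr rfl fun y _ => ?_
      ring
    have hKsymm : ∀ i j, K i j = K j i := by
      intro i j
      simp only [hK]
      rw [hπ, hπ, mul_comm ((G.degree (o i) : ℝ)) ((G.degree (o j) : ℝ))]
      field_simp [hvne i, hvne j, hlamne]
    have hTskew : ∀ i j, T i j = - T j i := by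
      intro i j
      simp only [hT]
      exact transport_sqrtlog G Γ hauto (o i) (o j)
    have hgoal : (∑ i, ∑ j, K i j * T i j) = 0 := by
      have hflip : (∑ i, ∑ j, K i j * T i j) = - (∑ i, ∑ j, K i j * T i j) := by
        calc (∑ i, ∑ j, K i j * T i j) = ∑ j, ∑ i, K i j * T i j := Finset.sum_comm
          _ = ∑ j, ∑ i, -(K j i * T j i) := by
              refine Finset.sum_congr rfl fun j _ => Finset.sum_congr rfl fun i _ => ?_
              rw [hKsymm i j, hTskew i j]
              ring
          _ = - (∑ j, ∑ i, K j i * T j i) := by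
              simp [Finset.sum_neg_distrib]
          _ = - (∑ i, ∑ j, K i j * T i j) := rfl
      linarith
    calc (∑ i, ∑ j, ∑ y ∈ (G.neighborFinset (o i)).filter
            (fun y => y ∈ MulAction.orbit Γ (o j)),
          π i * (1 / lam) * (v j / v i) *
            ((G.degree (o i) : ℝ) * (G.degree (o j) : ℝ)) ^ (-(1 : ℝ) / 2) *
            Real.sqrt (modular Γ (o i) y) * Real.log (modular Γ (o i) y))
        = ∑ i, ∑ j, K i j * T i j :=
          Finset.sum_congr rfl fun i _ => Finset.sum_congr rfl fun j _ => hinner i j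
      _ = 0 := hgoal
end
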